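/- arXiv:2106.07196 — 11 statements merged into one kernel-verified Lean document; each statement's English description precedes it below -/
import Mathlib

section
/- Let p be a prime, F = F_{p^m}, and θ the field automorphism x ↦ x^{p^l} with gcd(l,m) = n and k = m/n > 1. For a ∈ F*, define f_{a,θ}(x) = a·x^θ − x·a^θ. Then the image of f_{a,θ} equals {x ∈ F : Tr_{F/F_{p^n}}((a·a^θ)^{-1}·x) = 0}, where Tr_{F/F_{p^n}} is the relative trace from F to the subfield F_{p^n} fixed by θ. -/
/-!
Write `θ x = x ^ p ^ l` and `σ x = x ^ p ^ n`, so that `θ = σ ^ (l / n)` and `σ` has order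
`k = m / n`. Dividing by `a` turns `f_{a,θ}` into `a·a^θ · (θ - 1)`, so it suffices to show that
the image of `θ - 1` is the kernel of `T = ∑_{i<k} σ^i`. Since `T ∘ σ = T`, the image lies in the
kernel. Conversely, `ker (θ - 1)` consists of roots of `X^{p^n} - X`, so the image has at least
`p^m / p^n` elements, while `ker T` consists of roots of a polynomial of degree `p^{n(k-1)}`.
-/

open Finset Polynomial

theorem Finset.sum_range_add_of_periodic {M : Type*} [AddCancelCommMonoid M] {u : ℕ → M}
    {k : ℕ} (hu : Function.Periodic u k) (j : ℕ) :
    ∑ i ∈ range k, u (i + j) = ∑ i ∈ range k, u i := by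
  induction j with
  | zero => rfl
  | succ j ih =>
    have hrotate : ∑ i ∈ range k, u (i + 1 + j) + u (0 + j) =
        ∑ i ∈ range k, u (i + j) + u (k + j) := by
      rw [← sum_range_succ' (fun i => u (i + j)), sum_range_succ]
    rw [zero_add, add_comm k j, hu, ih] at hrotate
    simpa only [add_right_comm _ 1 j, add_assoc] using add_right_cancel hrotate

theorem Polynomial.ncard_le_natDegree_of_forall_isRoot {R : Type*} [CommRing R] [IsDomain R]
    {q : R[X]} (hq : q ≠ 0) {S : Set R} (hS : ∀ x ∈ S, q.IsRoot x) :
    S.ncard ≤ q.natDegree := by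
  classical
  calc S.ncard ≤ (q.roots.toFinset : Set R).ncard :=
        Set.ncard_le_ncard (fun x hx => by simpa [mem_roots hq] using hS x hx) (finite_toSet _)
    _ = q.roots.toFinset.card := Set.ncard_coe_finset _
    _ ≤ q.natDegree := (Multiset.toFinset_card_le _).trans (card_roots' q)

section FrobeniusTrace

variable (F : Type*) [CommRing F] (p : ℕ) [ExpChar F p]

def frobeniusSub (l : ℕ) : F →+ F :=
  (iterateFrobenius F p l).toAddMonoidHom - AddMonoidHom.id F

/-- For `Fintype.card F = p ^ (n * k)` this is the relative trace `Tr_{F/𝔽_{p^n}}`. -/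
def frobeniusTrace (n k : ℕ) : F →+ F :=
  ∑ i ∈ range k, (iterateFrobenius F p (n * i)).toAddMonoidHom

variable {F p}

@[simp]
theorem frobeniusSub_apply (l : ℕ) (x : F) : frobeniusSub F p l x = x ^ p ^ l - x := rfl

@[simp]
theorem frobeniusTrace_apply (n k : ℕ) (x : F) :
    frobeniusTrace F p n k x = ∑ i ∈ range k, x ^ p ^ (n * i) := by
  simp [frobeniusTrace, iterateFrobenius_def]

theorem card_ker_frobeniusTrace_le [IsDomain F] (hp : 1 < p) {n k : ℕ} (hn : n ≠ 0)
    (hk : k ≠ 0) :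
    Nat.card (frobeniusTrace F p n k).ker ≤ p ^ (n * (k - 1)) := by
  set q : F[X] := ∑ i ∈ range k, X ^ p ^ (n * i)
  have hcoeff : q.coeff 1 = 1 := by
    rw [finsetSum_coeff, sum_eq_single_of_mem 0 (mem_range.2 (Nat.pos_of_ne_zero hk))]
    · simp
    · intro i _ hi
      rw [coeff_X_pow, if_neg]
      exact (Nat.one_lt_pow (Nat.mul_ne_zero hn hi) hp).ne
  have hq : q ≠ 0 := fun h => by simp [h] at hcoeff
  have hdeg : q.natDegree ≤ p ^ (n * (k - 1)) :=
    natDegree_sum_le_of_forall_le _ _ fun i hi => by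
      rw [natDegree_X_pow]
      exact Nat.pow_le_pow_right (by omega) (Nat.mul_le_mul_left n (by simp at hi; omega))
  rw [← SetLike.coe_sort_coe, Nat.card_coe_set_eq]
  refine (ncard_le_natDegree_of_forall_isRoot hq fun x hx => ?_).trans hdeg
  simpa [q, eval_finsetSum] using hx

end FrobeniusTrace

section FiniteField

variable {F : Type*} [Field F] [Fintype F] {p : ℕ} [ExpChar F p] {m : ℕ}

theorem frobeniusTrace_pow_pow (hF : Fintype.card F = p ^ m) {n k : ℕ} (hnk : n * k = m)
    (x : F) (j : ℕ) :
    frobeniusTrace F p n k (x ^ p ^ (n * j)) = frobeniusTrace F p n k x := by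
  have hperiodic : Function.Periodic (fun i => x ^ p ^ (n * i)) k := fun i => by
    simp only [mul_add, pow_add, pow_mul, hnk, ← hF, FiniteField.pow_card]
  simp only [frobeniusTrace_apply, ← pow_mul, ← pow_add, ← mul_add, add_comm j]
  exact sum_range_add_of_periodic hperiodic j

theorem range_frobeniusSub_le_ker_frobeniusTrace (hF : Fintype.card F = p ^ m) {l n k : ℕ}
    (hnk : n * k = m) (hnl : n ∣ l) :
    (frobeniusSub F p l).range ≤ (frobeniusTrace F p n k).ker := by
  rintro _ ⟨x, rfl⟩
  obtain ⟨j, rfl⟩ := hnl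
  rw [AddMonoidHom.mem_ker, frobeniusSub_apply, map_sub, frobeniusTrace_pow_pow hF hnk, sub_self]

theorem card_ker_frobeniusSub_le (hF : Fintype.card F = p ^ m) (hp : 1 < p) (hm : m ≠ 0)
    (l : ℕ) : Nat.card (frobeniusSub F p l).ker ≤ p ^ l.gcd m := by
  have hgcd : l.gcd m ≠ 0 := Nat.gcd_ne_zero_right hm
  rw [← FiniteField.X_pow_card_pow_sub_X_natDegree_eq F hgcd hp, ← SetLike.coe_sort_coe,
    Nat.card_coe_set_eq]
  refine ncard_le_natDegree_of_forall_isRoot (FiniteField.X_pow_card_pow_sub_X_ne_zero F hgcd hp)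
    fun x hx => ?_
  have hfix_l : Function.IsPeriodicPt (· ^ p) l x := by
    rw [Function.IsPeriodicPt, Function.IsFixedPt, pow_iterate]
    simpa [sub_eq_zero] using hx
  have hfix_m : Function.IsPeriodicPt (· ^ p) m x := by
    rw [Function.IsPeriodicPt, Function.IsFixedPt, pow_iterate, ← hF]
    exact FiniteField.pow_card x
  have hfix := hfix_l.gcd hfix_m
  rw [Function.IsPeriodicPt, Function.IsFixedPt, pow_iterate] at hfix
  simp [hfix]

theorem range_frobeniusSub_eq_ker_frobeniusTrace (hF : Fintype.card F = p ^ m) (hp : 1 < p)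
    (l : ℕ) :
    (frobeniusSub F p l).range = (frobeniusTrace F p (l.gcd m) (m / l.gcd m)).ker := by
  set n := l.gcd m
  set k := m / n
  have hm : m ≠ 0 := by
    rintro rfl
    simpa [hF] using Fintype.one_lt_card (α := F)
  have hn : n ≠ 0 := Nat.gcd_ne_zero_right hm
  have hnk : n * k = m := Nat.mul_div_cancel' (Nat.gcd_dvd_right l m)
  have hk : k ≠ 0 := by
    rintro hk
    rw [hk, mul_zero] at hnk
    exact hm hnk.symm
  refine AddSubgroup.eq_of_le_of_card_ge
    (range_frobeniusSub_le_ker_frobeniusTrace hF hnk (Nat.gcd_dvd_left l m)) ?_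
  have hrank_nullity :
      Nat.card (frobeniusSub F p l).range * Nat.card (frobeniusSub F p l).ker = p ^ m := by
    rw [← AddSubgroup.index_ker, mul_comm, AddSubgroup.card_mul_index, Nat.card_eq_fintype_card,
      hF]
  have hexp : p ^ (n * (k - 1)) * p ^ n = p ^ m := by
    rw [← pow_add, ← hnk, ← Nat.mul_add_one, Nat.sub_add_cancel (Nat.pos_of_ne_zero hk)]
  refine Nat.le_of_mul_le_mul_right ?_ (pow_pos (zero_lt_one.trans hp) n)
  calc Nat.card (frobeniusTrace F p n k).ker * p ^ n
      ≤ p ^ (n * (k - 1)) * p ^ n := Nat.mul_le_mul_right _ (card_ker_frobeniusTrace_le hp hn hk)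
    _ = Nat.card (frobeniusSub F p l).range * Nat.card (frobeniusSub F p l).ker := by
      rw [hexp, hrank_nullity]
    _ ≤ Nat.card (frobeniusSub F p l).range * p ^ n :=
      Nat.mul_le_mul_left _ (card_ker_frobeniusSub_le hF hp hm l)

end FiniteField

theorem mul_pow_sub_mul_pow_eq {F : Type*} [Field F] {a : F} (ha : a ≠ 0) (q : ℕ) (x : F) :
    a * x ^ q - x * a ^ q = a * a ^ q * ((x / a) ^ q - x / a) := by
  rw [div_pow]
  field_simp

theorem stmt_0_general (p m l n : ℕ) (hp : p.Prime)
    (hn : n = Nat.gcd l m)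
    (F : Type) [Field F] [Fintype F] (hF : Fintype.card F = p ^ m)
    (a : F) (ha : a ≠ 0) :
    Set.range (fun x : F => a * x ^ p ^ l - x * a ^ p ^ l) =
      {x : F | ∑ i ∈ Finset.range (m / n), ((a * a ^ p ^ l)⁻¹ * x) ^ p ^ (n * i) = 0} := by
  have : Fact p.Prime := ⟨hp⟩
  have : CharP F p := charP_of_card_eq_prime_pow hF
  have hc : a * a ^ p ^ l ≠ 0 := mul_ne_zero ha (pow_ne_zero _ ha)
  have hrange (z : F) : z ∈ Set.range (fun x : F => a * x ^ p ^ l - x * a ^ p ^ l) ↔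
      (a * a ^ p ^ l)⁻¹ * z ∈ (frobeniusSub F p l).range := by
    simp only [Set.mem_range, AddMonoidHom.mem_range, frobeniusSub_apply,
      mul_pow_sub_mul_pow_eq ha, eq_inv_mul_iff_mul_eq₀ hc]
    exact ⟨fun ⟨x, hx⟩ => ⟨x / a, hx⟩,
      fun ⟨y, hy⟩ => ⟨a * y, by rwa [mul_div_cancel_left₀ y ha]⟩⟩
  ext z
  rw [hrange, range_frobeniusSub_eq_ker_frobeniusTrace hF hp.one_lt, ← hn]
  simp

/-- The image of `f_{a,θ}(x) = a·x^θ − x·a^θ` equals the set of elements whose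
relative trace (to the fixed subfield `F_{p^n}`) of `(a·a^θ)⁻¹ · x` is zero. -/
theorem stmt_0 (p m l n : ℕ) (hp : p.Prime) (hm : 0 < m) (hl : 0 < l)
    (hn : n = Nat.gcd l m) (hk : 1 < m / n)
    (F : Type) [Field F] [Fintype F] (hF : Fintype.card F = p ^ m)
    (a : F) (ha : a ≠ 0) :
    Set.range (fun x : F => a * x ^ p ^ l - x * a ^ p ^ l) =
      {x : F | ∑ i ∈ Finset.range (m / n), ((a * a ^ p ^ l)⁻¹ * x) ^ p ^ (n * i) = 0} :=
  stmt_0_general p m l n hp hn F hF a ha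
end

section
/- Let p be a prime, F = F_{p^m}, θ(x) = x^{p^l} a nontrivial field automorphism of F (i.e., gcd(l,m) < m). For a, b ∈ F*, the images of the maps f_{a,θ}(x) = a·x^θ − x·a^θ and f_{b,θ}(x) = b·x^θ − x·b^θ coincide if and only if (a·b^{-1})^{θ²} = a·b^{-1}, i.e., a·b^{-1} lies in the fixed field of θ². -/
/-!
Substituting `x = a y` gives `f_{a,θ}(a y) = a θ(a) (θ(y) - y)`, so the image of `f_{a,θ}` is
`a θ(a) • T` with `T = Im(θ - id)`. With `c = a b⁻¹`, the two images agree iff `u = c θ(c)`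
satisfies `u • T = T`. The multipliers of `T` form a subfield `M` containing the fixed field `K₀`
of `θ`, and `T` is a proper `M`-subspace of `F`; since `|T| |K₀| = |F|` (kernel of `θ - id`), this
forces `|M| ≤ |F| / |T| = |K₀|`, so `M = K₀`. Hence the condition is `θ(c θ(c)) = c θ(c)`, i.e.
`θ²(c) = c`.
-/

open Pointwise

theorem Submodule.card_mul_card_le_card_of_ne_top {K V : Type*} [DivisionRing K] [AddCommGroup V]
    [Module K V] [Finite K] [Finite V] {W : Submodule K V} (hW : W ≠ ⊤) :
    Nat.card K * Nat.card W ≤ Nat.card V := by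
  have : Module.Finite K V := Module.Finite.of_finite
  rw [Module.natCard_eq_pow_finrank (K := K) (V := W),
    Module.natCard_eq_pow_finrank (K := K) (V := V), ← pow_succ']
  exact Nat.pow_le_pow_right Nat.card_pos (Submodule.finrank_lt hW)

variable {F : Type*} [Field F]

def RingHom.subIdRange (σ : F →+* F) : AddSubgroup F :=
  (σ.toAddMonoidHom - AddMonoidHom.id F).range

theorem RingHom.coe_subIdRange (σ : F →+* F) :
    (σ.subIdRange : Set F) = Set.range fun x => σ x - x :=
  rfl

theorem RingHom.range_eq_smul_subIdRange (σ : F →+* F) {a : F} (ha : a ≠ 0) :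
    Set.range (fun x => a * σ x - x * σ a) = (a * σ a) • (σ.subIdRange : Set F) := by
  have hsurj : Function.Surjective (a * ·) := fun y => ⟨a⁻¹ * y, mul_inv_cancel_left₀ ha y⟩
  rw [σ.coe_subIdRange, Set.smul_set_range, ← hsurj.range_comp]
  congr 1
  ext x
  simp only [Function.comp_apply, map_mul, smul_eq_mul]
  ring

theorem RingHom.card_subIdRange_mul_card_eqLocusField (σ : F →+* F) :
    Nat.card σ.subIdRange * Nat.card (σ.eqLocusField (RingHom.id F)) = Nat.card F := by
  rw [subIdRange, ← AddSubgroup.index_ker, mul_comm,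
    ← (σ.toAddMonoidHom - AddMonoidHom.id F).ker.card_mul_index]
  congr 1
  refine Nat.card_congr (Equiv.subtypeEquivRight fun x => ?_)
  rw [RingHom.mem_eqLocusField, AddMonoidHom.mem_ker]
  exact sub_eq_zero.symm

variable [_root_.Finite F]

namespace AddSubgroup

def multiplierSubfield (T : AddSubgroup F) : Subfield F where
  carrier := {u | ∀ y ∈ T, u * y ∈ T}
  mul_mem' hu hv y hy := by rw [mul_assoc]; exact hu _ (hv y hy)
  one_mem' y hy := by rwa [one_mul]
  add_mem' hu hv y hy := by rw [add_mul]; exact T.add_mem (hu y hy) (hv y hy)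
  zero_mem' y _ := by rw [zero_mul]; exact T.zero_mem
  neg_mem' hu y hy := by rw [neg_mul]; exact T.neg_mem (hu y hy)
  inv_mem' u hu y hy := by
    rcases eq_or_ne u 0 with rfl | hu0
    · rw [inv_zero, zero_mul]; exact T.zero_mem
    -- multiplication by `u` maps the finite set `T` injectively into itself, hence onto it
    have hsurj : Function.Surjective fun z : T => (⟨u * z, hu z z.2⟩ : T) :=
      Finite.surjective_of_injective fun z w h =>
        Subtype.ext (mul_left_cancel₀ hu0 (congrArg Subtype.val h))
    obtain ⟨z, hz⟩ := hsurj ⟨y, hy⟩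
    rw [← show u * z = y from congrArg Subtype.val hz, inv_mul_cancel_left₀ hu0]
    exact z.2

def toMultiplierSubmodule (T : AddSubgroup F) : Submodule T.multiplierSubfield F where
  carrier := T
  add_mem' := T.add_mem
  zero_mem' := T.zero_mem
  smul_mem' u _ hy := u.2 _ hy

end AddSubgroup

theorem RingHom.eqLocusField_le_multiplierSubfield (σ : F →+* F) :
    σ.eqLocusField (RingHom.id F) ≤ σ.subIdRange.multiplierSubfield := by
  rintro c hc _ ⟨x, rfl⟩
  refine ⟨c * x, ?_⟩
  show σ (c * x) - c * x = c * (σ x - x)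
  rw [map_mul, mem_eqLocusField.mp hc, id_apply, mul_sub]

theorem RingHom.multiplierSubfield_subIdRange (σ : F →+* F) :
    σ.subIdRange.multiplierSubfield = σ.eqLocusField (RingHom.id F) := by
  set T := σ.subIdRange
  set K₀ := σ.eqLocusField (RingHom.id F)
  have hle : K₀ ≤ T.multiplierSubfield := σ.eqLocusField_le_multiplierSubfield
  have hcard : Nat.card T * Nat.card K₀ = Nat.card F := σ.card_subIdRange_mul_card_eqLocusField
  have hT : T.toMultiplierSubmodule ≠ ⊤ := by
    intro h
    have hT : T = ⊤ := congrArg Submodule.toAddSubgroup h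
    rw [hT, AddSubgroup.card_top] at hcard
    have hK₀ : Nat.card K₀ = 1 := (Nat.mul_eq_left Nat.card_pos.ne').mp hcard
    exact Finite.one_lt_card.ne' hK₀
  have hM : Nat.card T.multiplierSubfield * Nat.card T ≤ Nat.card T * Nat.card K₀ :=
    (Submodule.card_mul_card_le_card_of_ne_top hT).trans hcard.ge
  have hMK₀ : Nat.card T.multiplierSubfield ≤ Nat.card K₀ :=
    Nat.le_of_mul_le_mul_right (by rwa [mul_comm (Nat.card T)] at hM) Nat.card_pos
  refine (SetLike.coe_injective (Set.eq_of_subset_of_ncard_le hle ?_)).symm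
  rwa [← Nat.card_coe_set_eq, ← Nat.card_coe_set_eq]

theorem RingHom.smul_subIdRange_eq_self_iff (σ : F →+* F) {u : F} (hu : u ≠ 0) :
    u • (σ.subIdRange : Set F) = σ.subIdRange ↔ σ u = u := by
  have hmem : σ u = u ↔ u ∈ σ.subIdRange.multiplierSubfield := by
    rw [σ.multiplierSubfield_subIdRange]
    exact (mem_eqLocusField (f := σ) (g := RingHom.id F)).symm
  rw [hmem]
  refine ⟨fun h y hy => ?_, fun h => ?_⟩
  · rw [← SetLike.mem_coe, ← h]
    exact Set.smul_mem_smul_set hy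
  · refine (Set.smul_set_subset_iff.mpr fun y hy => h y hy).antisymm ?_
    rw [Set.subset_smul_set_iff₀ hu]
    exact Set.smul_set_subset_iff.mpr fun y hy => inv_mem h y hy

theorem RingHom.range_eq_range_iff (σ : F →+* F) {a b : F} (ha : a ≠ 0) (hb : b ≠ 0) :
    Set.range (fun x => a * σ x - x * σ a) = Set.range (fun x => b * σ x - x * σ b) ↔
      σ (σ (a * b⁻¹)) = a * b⁻¹ := by
  set c := a * b⁻¹
  have hc : c ≠ 0 := mul_ne_zero ha (inv_ne_zero hb)
  have hσ {x : F} (hx : x ≠ 0) : σ x ≠ 0 := (map_ne_zero σ).mpr hx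
  have hab : a * σ a = (c * σ c) * (b * σ b) := by
    simp only [c, map_mul, map_inv₀]
    field_simp [hσ hb]
  rw [σ.range_eq_smul_subIdRange ha, σ.range_eq_smul_subIdRange hb, hab, mul_comm, mul_smul,
    (MulAction.injective₀ (mul_ne_zero hb (hσ hb))).eq_iff,
    σ.smul_subIdRange_eq_self_iff (mul_ne_zero hc (hσ hc)), map_mul, mul_comm c,
    mul_right_inj' (hσ hc)]

theorem stmt_1_general (p m l : ℕ) (hp : p.Prime)
    (F : Type) [Field F] [Fintype F] (hF : Fintype.card F = p ^ m)
    (a b : F) (ha : a ≠ 0) (hb : b ≠ 0) :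
    Set.range (fun x : F => a * x ^ p ^ l - x * a ^ p ^ l) =
      Set.range (fun x : F => b * x ^ p ^ l - x * b ^ p ^ l) ↔
    (a * b⁻¹) ^ p ^ (2 * l) = a * b⁻¹ := by
  have : Fact p.Prime := ⟨hp⟩
  have : CharP F p := charP_of_card_eq_prime_pow hF
  have key := (iterateFrobenius F p l).range_eq_range_iff ha hb
  simp only [iterateFrobenius_def] at key
  rwa [← pow_mul, ← pow_add, ← two_mul] at key

/-- For nonzero `a, b`, `Im(f_{a,θ}) = Im(f_{b,θ})` iff `a·b⁻¹` is fixed by `θ²`. -/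
theorem stmt_1 (p m l : ℕ) (hp : p.Prime) (hm : 0 < m) (hl : 0 < l)
    (hlm : Nat.gcd l m < m)
    (F : Type) [Field F] [Fintype F] (hF : Fintype.card F = p ^ m)
    (a b : F) (ha : a ≠ 0) (hb : b ≠ 0) :
    Set.range (fun x : F => a * x ^ p ^ l - x * a ^ p ^ l) =
      Set.range (fun x : F => b * x ^ p ^ l - x * b ^ p ^ l) ↔
    (a * b⁻¹) ^ p ^ (2 * l) = a * b⁻¹ :=
  stmt_1_general p m l hp F hF a b ha hb
end

section
/- Let p be a prime and n, m positive integers with n = gcd(l,m) and k = m/n. Then gcd(p^l + 1, p^m − 1) equals 1 if k is odd and p = 2; equals 2 if k is odd and p is odd; and equals p^n + 1 if k is even. -/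
/-!
Let `g = gcd(a^l + 1, a^m - 1)` and `n = gcd(l, m)`. Modulo `g` we have `a^l = -1` and `a^m = 1`,
so the order of `a` divides `gcd(2l, m)`, which is `n` or `2n` according as `m / n` is odd or even.
If it is odd, then `a^l = 1 = -1`, so `g ∣ 2`. If it is even, then `l / n` is odd, so
`a^n = a^l = -1` and `g ∣ a^n + 1`; conversely `a^n + 1` divides `a^l + 1` (odd exponent `l / n`)
and `a^(2n) - 1 ∣ a^m - 1`.
-/

namespace Nat

theorem gcd_two_mul_left (l m : ℕ) : gcd (2 * l) m = gcd 2 (m / gcd l m) * gcd l m := by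
  rcases (gcd l m).eq_zero_or_pos with h | h
  · obtain ⟨rfl, rfl⟩ := gcd_eq_zero_iff.mp h
    simp
  · have hcop := coprime_div_gcd_div_gcd h
    have hl := Nat.div_mul_cancel (gcd_dvd_left l m)
    have hm := Nat.div_mul_cancel (gcd_dvd_right l m)
    set n := gcd l m
    calc gcd (2 * l) m = gcd (2 * (l / n) * n) (m / n * n) := by rw [mul_assoc, hl, hm]
      _ = gcd 2 (m / n) * n := by rw [gcd_mul_right, hcop.gcd_mul_right_cancel]

theorem odd_div_gcd_of_even_div_gcd {l m : ℕ} (hm : 0 < m) (hk : Even (m / gcd l m)) :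
    Odd (l / gcd l m) := by
  have hcop := coprime_div_gcd_div_gcd (gcd_pos_of_pos_right l hm)
  exact coprime_two_left.mp (hcop.coprime_dvd_right (even_iff_two_dvd.mp hk)).symm

end Nat

section PowEqNegOne

variable {R : Type*} [CommRing R] {x : R} {l m : ℕ}

theorem pow_gcd_two_mul_eq_one (hxl : x ^ l = -1) (hxm : x ^ m = 1) :
    x ^ (Nat.gcd 2 (m / Nat.gcd l m) * Nat.gcd l m) = 1 := by
  rw [← Nat.gcd_two_mul_left, pow_gcd_eq_one, pow_mul', hxl]
  exact ⟨neg_one_sq, hxm⟩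

theorem two_eq_zero_of_pow_eq_neg_one (hxl : x ^ l = -1) (hxm : x ^ m = 1)
    (hk : Odd (m / Nat.gcd l m)) : (2 : R) = 0 := by
  have hxn : x ^ Nat.gcd l m = 1 := by
    simpa [(Nat.coprime_two_left.mpr hk).gcd_eq_one] using pow_gcd_two_mul_eq_one hxl hxm
  have hdiv := Nat.div_mul_cancel (Nat.gcd_dvd_left l m)
  set n := Nat.gcd l m
  have hxl' : x ^ l = 1 := by rw [← hdiv, mul_comm, pow_mul, hxn, one_pow]
  linear_combination hxl - hxl'

theorem pow_gcd_eq_neg_one (hxl : x ^ l = -1) (hxm : x ^ m = 1) (hm : 0 < m)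
    (hk : Even (m / Nat.gcd l m)) : x ^ Nat.gcd l m = -1 := by
  have hx2n : x ^ (2 * Nat.gcd l m) = 1 := by
    simpa [Nat.gcd_eq_left (even_iff_two_dvd.mp hk)] using pow_gcd_two_mul_eq_one hxl hxm
  obtain ⟨t, ht⟩ := Nat.odd_div_gcd_of_even_div_gcd hm hk
  have hdiv := Nat.div_mul_cancel (Nat.gcd_dvd_left l m)
  set n := Nat.gcd l m
  have hl : l = 2 * n * t + n := by rw [← hdiv, ht]; ring
  rw [← hxl, hl, pow_add, pow_mul, hx2n, one_pow, one_mul]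

end PowEqNegOne

namespace Nat

variable {a l m : ℕ}

theorem pow_eq_neg_one_and_pow_eq_one_mod_gcd (ha : 0 < a) :
    ((a : ZMod (gcd (a ^ l + 1) (a ^ m - 1))) ^ l = -1) ∧
      ((a : ZMod (gcd (a ^ l + 1) (a ^ m - 1))) ^ m = 1) := by
  have hl := (ZMod.natCast_eq_zero_iff _ _).mpr (gcd_dvd_left (a ^ l + 1) (a ^ m - 1))
  have hm := (ZMod.natCast_eq_zero_iff _ _).mpr (gcd_dvd_right (a ^ l + 1) (a ^ m - 1))
  rw [cast_sub (one_le_pow _ _ ha)] at hm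
  push_cast at hl hm
  exact ⟨eq_neg_of_add_eq_zero_left hl, sub_eq_zero.mp hm⟩

theorem gcd_pow_add_one_pow_sub_one_dvd_two (ha : 0 < a) (hk : Odd (m / gcd l m)) :
    gcd (a ^ l + 1) (a ^ m - 1) ∣ 2 := by
  obtain ⟨hxl, hxm⟩ := pow_eq_neg_one_and_pow_eq_one_mod_gcd (l := l) (m := m) ha
  exact (ZMod.natCast_eq_zero_iff _ _).mp (mod_cast two_eq_zero_of_pow_eq_neg_one hxl hxm hk)

theorem pow_gcd_add_one_dvd_pow_sub_one (hk : Even (m / gcd l m)) :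
    a ^ gcd l m + 1 ∣ a ^ m - 1 := by
  have hsq : a ^ gcd l m + 1 ∣ a ^ (gcd l m * 2) - 1 := by
    rw [pow_mul, ← one_pow 2, sq_sub_sq]
    exact dvd_mul_right _ _
  exact hsq.trans <| pow_sub_one_dvd_pow_sub_one a <|
    mul_dvd_of_dvd_div (gcd_dvd_right l m) (even_iff_two_dvd.mp hk)

theorem gcd_pow_add_one_pow_sub_one_of_even (ha : 0 < a) (hm : 0 < m)
    (hk : Even (m / gcd l m)) : gcd (a ^ l + 1) (a ^ m - 1) = a ^ gcd l m + 1 := by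
  obtain ⟨hxl, hxm⟩ := pow_eq_neg_one_and_pow_eq_one_mod_gcd (l := l) (m := m) ha
  have hle : gcd (a ^ l + 1) (a ^ m - 1) ∣ a ^ gcd l m + 1 := by
    refine (ZMod.natCast_eq_zero_iff _ _).mp ?_
    push_cast
    rw [pow_gcd_eq_neg_one hxl hxm hm hk, neg_add_cancel]
  have hge : a ^ gcd l m + 1 ∣ a ^ l + 1 := by
    simpa only [one_pow, ← pow_mul, Nat.mul_div_cancel' (gcd_dvd_left l m)] using
      (odd_div_gcd_of_even_div_gcd hm hk).nat_add_dvd_pow_add_pow (a ^ gcd l m) 1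
  exact dvd_antisymm hle (dvd_gcd hge (pow_gcd_add_one_dvd_pow_sub_one hk))

end Nat

theorem stmt_3_general (p m l n k : ℕ) (hp : p.Prime) (hm : 0 < m)
    (hn : n = Nat.gcd l m) (hk : k = m / n) :
    (Odd k → p = 2 → Nat.gcd (p ^ l + 1) (p ^ m - 1) = 1) ∧
    (Odd k → Odd p → Nat.gcd (p ^ l + 1) (p ^ m - 1) = 2) ∧
    (Even k → Nat.gcd (p ^ l + 1) (p ^ m - 1) = p ^ n + 1) := by
  subst hn hk
  refine ⟨fun hk hp2 => ?_, fun hk hodd => ?_,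
    Nat.gcd_pow_add_one_pow_sub_one_of_even hp.pos hm⟩
  · subst hp2
    have hodd : Odd (2 ^ m - 1) :=
      Nat.Even.sub_odd Nat.one_le_two_pow ((Nat.even_pow' hm.ne').mpr even_two) odd_one
    exact Nat.eq_one_of_dvd_coprimes (Nat.coprime_two_left.mpr hodd)
      (Nat.gcd_pow_add_one_pow_sub_one_dvd_two two_pos hk) (Nat.gcd_dvd_right _ _)
  · refine Nat.dvd_antisymm (Nat.gcd_pow_add_one_pow_sub_one_dvd_two hp.pos hk) ?_
    exact Nat.dvd_gcd hodd.pow.add_one.two_dvd (Nat.Odd.sub_odd hodd.pow odd_one).two_dvd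

/-- Value of `gcd(p^l + 1, p^m − 1)` according to the parity of `k = m / gcd(l,m)`. -/
theorem stmt_3 (p m l n k : ℕ) (hp : p.Prime) (hm : 0 < m) (hl : 0 < l)
    (hn : n = Nat.gcd l m) (hk : k = m / n) :
    (Odd k → p = 2 → Nat.gcd (p ^ l + 1) (p ^ m - 1) = 1) ∧
    (Odd k → Odd p → Nat.gcd (p ^ l + 1) (p ^ m - 1) = 2) ∧
    (Even k → Nat.gcd (p ^ l + 1) (p ^ m - 1) = p ^ n + 1) :=
  stmt_3_general p m l n k hp hm hn hk
end

section
/- Let F = F_{p^m}, θ(x) = x^{p^l}, and let ψ_v(x) = ξ_p^{Tr_m(v·x)} be the additive character of F associated to v ∈ F, where Tr_m is the absolute trace of F and ξ_p a primitive p-th root of unity. For v ∈ F* and a ∈ F*, the image of f_{a,θ}(x) = a·x^θ − x·a^θ is contained in the kernel of ψ_v if and only if v·a^{θ+1} lies in the fixed field of θ (i.e., (v·a^{1+p^l})^{p^l} = v·a^{1+p^l}). -/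
/-- `Im(f_{a,θ}) ⊆ Ker(ψ_v)` iff `v·a^{θ+1}` is fixed by `θ`. -/
theorem stmt_4 (p m l : ℕ) (hp : p.Prime) (hm : 0 < m) (hl : 0 < l)
    (F : Type) [Field F] [Fintype F] (hF : Fintype.card F = p ^ m)
    (v a : F) (hv : v ≠ 0) (ha : a ≠ 0) :
    Set.range (fun x : F => a * x ^ p ^ l - x * a ^ p ^ l) ⊆
      {x : F | ∑ i ∈ Finset.range m, (v * x) ^ p ^ i = 0} ↔
    (v * a ^ (1 + p ^ l)) ^ p ^ l = v * a ^ (1 + p ^ l) := by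
  -- Characteristic p
  have hchar : CharP F p := by
    obtain ⟨q, hq_char⟩ := CharP.exists F
    have hqprime : q.Prime := CharP.char_is_prime F q
    haveI := Fact.mk hqprime
    obtain ⟨n, hn⟩ := FiniteField.card F q
    have : p = q := by
      have hpq : p ∣ q ^ (n : ℕ) := by
        rw [← hn.2, hF]
        exact dvd_pow_self p hm.ne'
      exact ((Nat.prime_dvd_prime_iff_eq hp hqprime).1 (hp.dvd_of_dvd_pow hpq))
    rwa [this]
  haveI := Fact.mk hp
  have hp2 : 2 ≤ p := hp.two_le
  have hppos : 0 < p := hp.pos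
  -- every element satisfies x^(p^m) = x
  have hcard : ∀ x : F, x ^ p ^ m = x := fun x => by
    rw [← hF]; exact FiniteField.pow_card x
  have hcardpow : ∀ (x : F) (n : ℕ), x ^ (p ^ m) ^ n = x := by
    intro x n
    induction n with
    | zero => simp
    | succ n ih => rw [pow_succ, pow_mul, ih, hcard]
  -- the "trace" map
  set T : F → F := fun y => ∑ i ∈ Finset.range m, y ^ p ^ i with hT
  have T_zero : T 0 = 0 :=
    Finset.sum_eq_zero fun i _ => zero_pow (pow_pos hppos i).ne'
  have T_sub : ∀ y z : F, T (y - z) = T y - T z := by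
    intro y z
    simp only [hT, ← Finset.sum_sub_distrib]
    refine Finset.sum_congr rfl fun i _ => ?_
    exact sub_pow_char_pow y z i
  have T_frob : ∀ y : F, T (y ^ p) = T y := by
    intro y
    simp only [hT, ← pow_mul]
    have h1 : ∀ i, p * p ^ i = p ^ (i + 1) := fun i => by ring
    calc ∑ i ∈ Finset.range m, y ^ (p * p ^ i)
        = ∑ i ∈ Finset.range m, y ^ p ^ (i + 1) := by
          refine Finset.sum_congr rfl fun i _ => by rw [h1]
      _ = (∑ i ∈ Finset.range (m + 1), y ^ p ^ i) - y ^ p ^ 0 := by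
          rw [Finset.sum_range_succ' (fun i => y ^ p ^ i) m]; ring
      _ = ∑ i ∈ Finset.range m, y ^ p ^ i := by
          rw [Finset.sum_range_succ, hcard y]
          simp
  have T_frobpow : ∀ (y : F) (n : ℕ), T (y ^ p ^ n) = T y := by
    intro y n
    induction n with
    | zero => simp
    | succ n ih => rw [pow_succ, pow_mul, T_frob, ih]
  -- nondegeneracy
  have T_nondeg : ∀ c : F, (∀ x : F, T (c * x) = 0) → c = 0 := by
    intro c hc
    by_contra hc0
    have hall : ∀ y : F, T y = 0 := by
      intro y
      have := hc (c⁻¹ * y)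
      rwa [← mul_assoc, mul_inv_cancel₀ hc0, one_mul] at this
    -- polynomial argument
    set Q : Polynomial F := ∑ i ∈ Finset.range m, Polynomial.X ^ p ^ i with hQ
    have hQeval : ∀ y : F, Q.eval y = 0 := by
      intro y
      rw [hQ]
      simpa [Polynomial.eval_finset_sum] using hall y
    have hdeg : Q.natDegree ≤ p ^ (m - 1) := by
      refine Polynomial.natDegree_sum_le_of_forall_le _ _ fun i hi => ?_
      rw [Polynomial.natDegree_X_pow]
      exact Nat.pow_le_pow_right hppos (by
        simp only [Finset.mem_range] at hi; omega)
    have hQ0 : Q = 0 :=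
      Polynomial.eq_zero_of_natDegree_lt_card_of_eval_eq_zero' Q Finset.univ
        (fun i _ => hQeval i)
        (lt_of_le_of_lt hdeg (by
          rw [Finset.card_univ, hF]
          exact Nat.pow_lt_pow_right hp.one_lt (by omega)))
    have : Q.coeff (p ^ (m - 1)) = 1 := by
      rw [hQ, Polynomial.finset_sum_coeff]
      rw [Finset.sum_eq_single (m - 1)]
      · simp
      · intro i hi hne
        rw [Polynomial.coeff_X_pow]
        have : p ^ i ≠ p ^ (m - 1) :=
          fun h => hne (Nat.pow_right_injective hp2 h)
        simp [this, eq_comm]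
      · intro h
        exact absurd (Finset.mem_range.2 (by omega)) h
    rw [hQ0] at this
    simp at this
  -- injectivity of the p^l-power map
  have frob_inj : ∀ x y : F, x ^ p ^ l = y ^ p ^ l → x = y := by
    intro x y h
    have : (x - y) ^ p ^ l = 0 := by
      rw [sub_pow_char_pow x y l, h, sub_self]
    have := pow_eq_zero_iff (pow_pos hppos l).ne' |>.1 this
    exact sub_eq_zero.1 this
  set q := p ^ l with hqdef
  set k := l * (m - 1) with hk
  have hkl : q * p ^ k = (p ^ m) ^ l := by
    rw [hqdef, hk, ← pow_add, ← pow_mul]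
    congr 1
    have hm1 : m - 1 + 1 = m := Nat.succ_pred_eq_of_pos hm
    calc l + l * (m - 1) = l * (m - 1 + 1) := by ring
      _ = l * m := by rw [hm1]
      _ = m * l := by ring
  set c : F := (v * a) ^ p ^ k - v * a ^ q with hc
  -- reduce the range condition to T (c * x) = 0
  have hmain : ∀ x : F, T (v * (a * x ^ q - x * a ^ q)) = T (c * x) := by
    intro x
    have e1 : v * (a * x ^ q - x * a ^ q) = v * a * x ^ q - v * a ^ q * x := by ring
    rw [e1]
    have e2 : T (v * a * x ^ q) = T ((v * a) ^ p ^ k * x) := by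
      have : ((v * a) * x ^ q) ^ p ^ k = (v * a) ^ p ^ k * x := by
        rw [mul_pow, ← pow_mul, hkl, hcardpow]
      rw [← this, T_frobpow]
    rw [T_sub, e2, ← T_sub, hc, sub_mul]
  -- equivalence with c = 0
  have step1 : (Set.range (fun x : F => a * x ^ q - x * a ^ q) ⊆
      {x : F | ∑ i ∈ Finset.range m, (v * x) ^ p ^ i = 0}) ↔ c = 0 := by
    rw [Set.range_subset_iff]
    constructor
    · intro h
      refine T_nondeg c fun x => ?_
      rw [← hmain x]
      exact h x
    · intro h x
      show T (v * (a * x ^ q - x * a ^ q)) = 0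
      rw [hmain x, h, zero_mul, T_zero]
  rw [step1]
  -- c = 0 ↔ fixed-field condition
  have step2 : c = 0 ↔ (v * a ^ (1 + q)) ^ q = v * a ^ (1 + q) := by
    rw [hc, sub_eq_zero]
    have hexp : (1 + q) * q = q * q + q := by ring
    have expand : (v * a ^ (1 + q)) ^ q = (v * a ^ q) ^ q * a ^ q := by
      rw [mul_pow, mul_pow, ← pow_mul, ← pow_mul, mul_assoc, ← pow_add, hexp]
    constructor
    · intro h
      have h2 : ((v * a) ^ p ^ k) ^ q = (v * a ^ q) ^ q := by rw [h]
      have h3 : ((v * a) ^ p ^ k) ^ q = v * a := by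
        rw [← pow_mul, mul_comm (p ^ k) q, hkl, hcardpow]
      rw [h3] at h2
      -- h2 : v * a = (v * a ^ q) ^ q ; multiply by a ^ q
      have h4 : v * a * a ^ q = (v * a ^ q) ^ q * a ^ q := by rw [← h2]
      calc (v * a ^ (1 + q)) ^ q = (v * a ^ q) ^ q * a ^ q := expand
        _ = v * a * a ^ q := h4.symm
        _ = v * a ^ (1 + q) := by rw [pow_add, pow_one]; ring
    · intro h
      refine frob_inj _ _ ?_
      have h3 : ((v * a) ^ p ^ k) ^ q = v * a := by
        rw [← pow_mul, mul_comm (p ^ k) q, hkl, hcardpow]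
      rw [h3]
      have haq : a ^ q ≠ 0 := pow_ne_zero _ ha
      refine mul_right_cancel₀ haq ?_
      calc v * a * a ^ q = v * a ^ (1 + q) := by rw [pow_add, pow_one]; ring
        _ = (v * a ^ (1 + q)) ^ q := h.symm
        _ = (v * a ^ q) ^ q * a ^ q := expand
  exact step2
end

section
/- Let F = F_{2^r} and U = {x ∈ F : Tr_r(x) = 0} the kernel of the absolute trace. Define Q : F → F_2 by Q(x) = Σ_{i=0}^{(r−1)/2} Tr_r(x^{2^i+1}) if r is odd, and Q(x) = Σ_{i=0}^{r/2−1} Tr_r(x^{2^i+1}) + Tr_r(c·x^{2^{r/2}+1}) if r is even, where c ∈ F satisfies c + c^{2^{r/2}} = 1. Then for all x, y ∈ U, Q(x+y) = Q(x) + Q(y) + Tr_r(x·y). -/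
/-- Quadratic behaviour of the function `Q` on the trace-zero hyperplane of `F_{2^r}`:
`Q(x+y) = Q(x) + Q(y) + Tr_r(xy)` for `x, y` of trace zero. -/
theorem stmt_5 (r : ℕ) (hr : 0 < r)
    (F : Type) [Field F] [Fintype F] (hF : Fintype.card F = 2 ^ r)
    (c : F) (hc : Even r → c + c ^ 2 ^ (r / 2) = 1)
    (Tr : F → F) (hTr : ∀ x, Tr x = ∑ i ∈ Finset.range r, x ^ 2 ^ i)
    (Q : F → F)
    (hQ : ∀ x, Q x =
      if Odd r then ∑ i ∈ Finset.range ((r + 1) / 2), Tr (x ^ (2 ^ i + 1))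
      else (∑ i ∈ Finset.range (r / 2), Tr (x ^ (2 ^ i + 1))) + Tr (c * x ^ (2 ^ (r / 2) + 1))) :
    ∀ x y : F, Tr x = 0 → Tr y = 0 → Q (x + y) = Q x + Q y + Tr (x * y) := by
  -- characteristic two
  haveI hchar : CharP F 2 := by
    have h : ((2 ^ r : ℕ) : F) = 0 := by rw [← hF]; exact FiniteField.cast_card_eq_zero F
    have hdvd : ringChar F ∣ 2 ^ r := (CharP.cast_eq_zero_iff F (ringChar F) _).mp h
    have hp : (ringChar F).Prime := CharP.char_is_prime F (ringChar F)
    exact ringChar.eq_iff.mp ((Nat.prime_dvd_prime_iff_eq hp Nat.prime_two).mp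
      (hp.dvd_of_dvd_pow hdvd))
  have hq : ∀ a : F, a ^ 2 ^ r = a := fun a => by rw [← hF]; exact FiniteField.pow_card a
  have hfa : ∀ (n : ℕ) (a b : F), (a + b) ^ 2 ^ n = a ^ 2 ^ n + b ^ 2 ^ n := fun n a b =>
    add_pow_char_pow (R:=F) (p:=2) (n:=n) (x:=a) (y:=b)
  -- additivity of Tr
  have hTr_add : ∀ a b : F, Tr (a + b) = Tr a + Tr b := by
    intro a b
    simp only [hTr, ← Finset.sum_add_distrib]
    exact Finset.sum_congr rfl fun i _ => hfa i a b
  -- Tr of a finite sum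
  have hTr_sum : ∀ (s : Finset ℕ) (f : ℕ → F), Tr (∑ i ∈ s, f i) = ∑ i ∈ s, Tr (f i) := by
    intro s f
    rw [hTr]
    have h1 : ∀ j ∈ Finset.range r, (∑ i ∈ s, f i) ^ 2 ^ j = ∑ i ∈ s, f i ^ 2 ^ j :=
      fun j _ => sum_pow_char_pow (R:=F) (p:=2) (n:=j) (s:=s) (f:=f)
    rw [Finset.sum_congr rfl h1, Finset.sum_comm]
    exact Finset.sum_congr rfl fun i _ => (hTr (f i)).symm
  -- Tr is Frobenius-invariant
  have hTr_frob : ∀ a : F, Tr (a ^ 2) = Tr a := by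
    intro a
    rw [hTr, hTr]
    have h1 : ∑ i ∈ Finset.range r, (a ^ 2) ^ 2 ^ i = ∑ i ∈ Finset.range r, a ^ 2 ^ (i + 1) :=
      Finset.sum_congr rfl fun i _ => by rw [← pow_mul, ← pow_succ']
    rw [h1]
    have h2 := Finset.sum_range_succ' (fun i => a ^ 2 ^ i) r
    rw [Finset.sum_range_succ] at h2
    rw [hq a] at h2
    norm_num at h2
    exact h2.symm
  have hTr_frob_pow : ∀ (n : ℕ) (a : F), Tr (a ^ 2 ^ n) = Tr a := by
    intro n
    induction n with
    | zero => intro a; norm_num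
    | succ n ih =>
      intro a
      have h : a ^ 2 ^ (n + 1) = (a ^ 2 ^ n) ^ 2 := by rw [← pow_mul, pow_succ]
      rw [h, hTr_frob, ih]
  -- key twisting lemma
  have key : ∀ i ≤ r, ∀ a b : F, Tr (a * b ^ 2 ^ i) = Tr (a ^ 2 ^ (r - i) * b) := by
    intro i hi a b
    rw [← hTr_frob_pow (r - i) (a * b ^ 2 ^ i)]
    congr 1
    have hb : (b ^ 2 ^ i) ^ 2 ^ (r - i) = b := by
      rw [← pow_mul, ← pow_add, (by omega : i + (r - i) = r), hq]
    rw [mul_pow, hb]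
  -- cross-term expansion
  have hcross : ∀ (i : ℕ) (a b : F),
      (a + b) ^ (2 ^ i + 1) = a ^ (2 ^ i + 1) + b ^ (2 ^ i + 1) + (a ^ 2 ^ i * b + a * b ^ 2 ^ i) := by
    intro i a b
    rw [pow_succ, pow_succ, pow_succ, hfa i a b]
    ring
  intro x y hx hy
  -- trace form of the cross-term expansion
  have hTc : ∀ i ≤ r, Tr ((x + y) ^ (2 ^ i + 1)) =
      Tr (x ^ (2 ^ i + 1)) + Tr (y ^ (2 ^ i + 1)) + Tr ((x ^ 2 ^ i + x ^ 2 ^ (r - i)) * y) := by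
    intro i hi
    rw [hcross i x y, hTr_add, hTr_add]
    congr 1
    rw [hTr_add, key i hi x y, ← hTr_add, add_mul]
  -- the sum identity: ∑_{i<k} (x^{2^i}+x^{2^{r-i}}) telescopes
  have hZ : ∀ k, 2 * k = r + 1 ∨ (2 * k = r ∧ 0 < k) →
      (∑ i ∈ Finset.range k, (x ^ 2 ^ i + x ^ 2 ^ (r - i)))
        + (if 2 * k = r then x ^ 2 ^ k else 0) = x := by
    intro k hk
    have hk_le : k ≤ r := by omega
    rw [Finset.sum_add_distrib]
    have hrefl : ∑ i ∈ Finset.range k, x ^ 2 ^ (r - i)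
        = ∑ i ∈ Finset.Ico (r + 1 - k) (r + 1), x ^ 2 ^ i := by
      rw [Finset.sum_Ico_eq_sum_range]
      have hn : r + 1 - (r + 1 - k) = k := by omega
      rw [hn]
      rw [← Finset.sum_range_reflect (fun i => x ^ 2 ^ (r - i)) k]
      exact Finset.sum_congr rfl fun i hi => by
        have : i < k := Finset.mem_range.mp hi
        congr 2
        omega
    rw [hrefl]
    have hfull : ∑ i ∈ Finset.range (r + 1), x ^ 2 ^ i = x := by
      rw [Finset.sum_range_succ, ← hTr, hx, hq, zero_add]
    rcases hk with h | ⟨h, hkpos⟩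
    · -- odd case: r + 1 - k = k
      rw [if_neg (by omega)]
      have : r + 1 - k = k := by omega
      rw [this, add_zero, ← Nat.Ico_zero_eq_range,
        Finset.sum_Ico_consecutive _ (Nat.zero_le k) (by omega : k ≤ r + 1),
        Nat.Ico_zero_eq_range, hfull]
    · -- even case: r + 1 - k = k + 1, extra middle term x^{2^k}
      rw [if_pos h]
      have h1 : r + 1 - k = k + 1 := by omega
      rw [h1]
      have : ∑ i ∈ Finset.range k, x ^ 2 ^ i + ∑ i ∈ Finset.Ico (k + 1) (r + 1), x ^ 2 ^ i
          + x ^ 2 ^ k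
          = ∑ i ∈ Finset.range (k + 1), x ^ 2 ^ i + ∑ i ∈ Finset.Ico (k + 1) (r + 1), x ^ 2 ^ i := by
        rw [Finset.sum_range_succ]; ring
      rw [this, ← Nat.Ico_zero_eq_range,
        Finset.sum_Ico_consecutive _ (Nat.zero_le (k + 1)) (by omega : k + 1 ≤ r + 1),
        Nat.Ico_zero_eq_range, hfull]
  -- turn a sum of cross traces into Tr of a product
  have hsum_cross : ∀ k ≤ r,
      ∑ i ∈ Finset.range k, Tr ((x ^ 2 ^ i + x ^ 2 ^ (r - i)) * y)
        = Tr ((∑ i ∈ Finset.range k, (x ^ 2 ^ i + x ^ 2 ^ (r - i))) * y) := by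
    intro k _
    rw [Finset.sum_mul, hTr_sum]
  rcases Nat.even_or_odd r with he | ho
  · -- even case
    have hne : ¬ Odd r := Nat.not_odd_iff_even.mpr he
    obtain ⟨m, hm⟩ := he
    have hm2 : r = 2 * m := by omega
    have hmdiv : r / 2 = m := by omega
    have hmpos : 0 < m := by omega
    have hmle : m ≤ r := by omega
    simp only [hQ, if_neg hne, hmdiv]
    -- c-term expansion
    have hcterm : Tr (c * (x + y) ^ (2 ^ m + 1)) =
        Tr (c * x ^ (2 ^ m + 1)) + Tr (c * y ^ (2 ^ m + 1)) + Tr (x ^ 2 ^ m * y) := by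
      have hmul : c * (x + y) ^ (2 ^ m + 1)
          = c * x ^ (2 ^ m + 1) + c * y ^ (2 ^ m + 1)
            + (c * (x ^ 2 ^ m * y) + c * x * y ^ 2 ^ m) := by
        rw [hcross m x y]; ring
      rw [hmul, hTr_add, hTr_add]
      congr 1
      rw [hTr_add, key m hmle (c * x) y]
      have hrm : r - m = m := by omega
      rw [hrm, mul_pow, ← hTr_add]
      have : c * (x ^ 2 ^ m * y) + c ^ 2 ^ m * x ^ 2 ^ m * y
          = (c + c ^ 2 ^ (r / 2)) * (x ^ 2 ^ m * y) := by rw [hmdiv]; ring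
      rw [this, hc ⟨m, hm⟩, one_mul]
    -- main sum expansion
    have hmain : ∑ i ∈ Finset.range m, Tr ((x + y) ^ (2 ^ i + 1))
        = ∑ i ∈ Finset.range m, Tr (x ^ (2 ^ i + 1))
          + ∑ i ∈ Finset.range m, Tr (y ^ (2 ^ i + 1))
          + ∑ i ∈ Finset.range m, Tr ((x ^ 2 ^ i + x ^ 2 ^ (r - i)) * y) := by
      rw [Finset.sum_congr rfl fun i hi => hTc i (by
        have := Finset.mem_range.mp hi; omega)]
      rw [Finset.sum_add_distrib, Finset.sum_add_distrib]
    rw [hmain, hcterm, hsum_cross m hmle]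
    have hZm := hZ m (Or.inr ⟨hm2.symm, hmpos⟩)
    rw [if_pos hm2.symm] at hZm
    have hfin : Tr ((∑ i ∈ Finset.range m, (x ^ 2 ^ i + x ^ 2 ^ (r - i))) * y) + Tr (x ^ 2 ^ m * y)
        = Tr (x * y) := by
      rw [← hTr_add, ← add_mul, hZm]
    -- rearrange and finish
    calc ∑ i ∈ Finset.range m, Tr (x ^ (2 ^ i + 1)) + ∑ i ∈ Finset.range m, Tr (y ^ (2 ^ i + 1))
          + Tr ((∑ i ∈ Finset.range m, (x ^ 2 ^ i + x ^ 2 ^ (r - i))) * y)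
          + (Tr (c * x ^ (2 ^ m + 1)) + Tr (c * y ^ (2 ^ m + 1)) + Tr (x ^ 2 ^ m * y))
        = (∑ i ∈ Finset.range m, Tr (x ^ (2 ^ i + 1)) + Tr (c * x ^ (2 ^ m + 1)))
          + (∑ i ∈ Finset.range m, Tr (y ^ (2 ^ i + 1)) + Tr (c * y ^ (2 ^ m + 1)))
          + (Tr ((∑ i ∈ Finset.range m, (x ^ 2 ^ i + x ^ 2 ^ (r - i))) * y)
            + Tr (x ^ 2 ^ m * y)) := by ring
      _ = _ := by rw [hfin]
  · -- odd case
    have hne : Odd r := ho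
    obtain ⟨m, hm⟩ := ho
    have hk : (r + 1) / 2 = m + 1 := by omega
    have hkle : m + 1 ≤ r := by omega
    simp only [hQ, if_pos hne, hk]
    have hmain : ∑ i ∈ Finset.range (m + 1), Tr ((x + y) ^ (2 ^ i + 1))
        = ∑ i ∈ Finset.range (m + 1), Tr (x ^ (2 ^ i + 1))
          + ∑ i ∈ Finset.range (m + 1), Tr (y ^ (2 ^ i + 1))
          + ∑ i ∈ Finset.range (m + 1), Tr ((x ^ 2 ^ i + x ^ 2 ^ (r - i)) * y) := by
      rw [Finset.sum_congr rfl fun i hi => hTc i (by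
        have := Finset.mem_range.mp hi; omega)]
      rw [Finset.sum_add_distrib, Finset.sum_add_distrib]
    rw [hmain, hsum_cross (m + 1) hkle]
    have hZm := hZ (m + 1) (Or.inl (by omega))
    rw [if_neg (by omega)] at hZm
    rw [add_zero] at hZm
    rw [hZm]
end

section
/- Let p be a prime, F = F_{p^m}, θ(x) = x^{p^l}, n = gcd(l,m), k = m/n. Suppose either (k is odd and p = 2) or k is even. Then the norm-type map y ↦ y^{θ+1} = y^{p^l + 1} from F* to F* has image containing F_{p^n}*; in particular, for every b ∈ F_{p^n}* there exists y ∈ F* with y^{p^l+1} = b. -/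
/-- `d ∣ c^a - 1` iff `c^a = 1` in `ZMod d`, for `1 ≤ c`. -/
lemma aux_dvd_pow_sub_one_iff {d c : ℕ} (hc : 1 ≤ c) (a : ℕ) :
    d ∣ c ^ a - 1 ↔ (c : ZMod d) ^ a = 1 := by
  have h1 : 1 ≤ c ^ a := Nat.one_le_pow _ _ hc
  rw [← ZMod.natCast_eq_zero_iff, Nat.cast_sub h1]
  push_cast
  rw [sub_eq_zero]

lemma aux_key (p m l n k : ℕ) (hp : p.Prime) (hm : 0 < m) (hl : 0 < l)
    (hn : n = Nat.gcd l m) (hk : k = m / n)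
    (hyp : (Odd k ∧ p = 2) ∨ Even k) :
    Nat.gcd (p ^ l + 1) (p ^ m - 1) * (p ^ n - 1) ∣ p ^ m - 1 := by
  have hp1 : 1 ≤ p := hp.one_le
  have hn0 : 0 < n := hn ▸ Nat.gcd_pos_of_pos_left m hl
  set d := Nat.gcd (p ^ l + 1) (p ^ m - 1) with hd
  have hdN : d ∣ p ^ l + 1 := Nat.gcd_dvd_left _ _
  have hdM : d ∣ p ^ m - 1 := Nat.gcd_dvd_right _ _
  set a := l / n with ha
  have hla : l = n * a := (Nat.div_mul_cancel (hn ▸ Nat.gcd_dvd_left l m)).symm.trans (by ring)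
  have hmk : m = n * k := by
    rw [hk, Nat.mul_div_cancel' (hn ▸ Nat.gcd_dvd_right l m)]
  have hcop : Nat.Coprime a k := by
    rw [ha, hk, hn]
    exact Nat.coprime_div_gcd_div_gcd (hn ▸ hn0)
  -- `p^l = -1` and `p^m = 1` in `ZMod d`
  have hpl : ((p : ZMod d)) ^ l = -1 := by
    have : ((p ^ l + 1 : ℕ) : ZMod d) = 0 := (ZMod.natCast_eq_zero_iff _ _).2 hdN
    push_cast at this
    linear_combination this
  have hpm : ((p : ZMod d)) ^ m = 1 := (aux_dvd_pow_sub_one_iff hp1 m).1 hdM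
  have hp2l : ((p : ZMod d)) ^ (2 * l) = 1 := by
    rw [two_mul, pow_add, hpl]; ring
  have hord : orderOf ((p : ZMod d)) ∣ Nat.gcd (2 * l) m :=
    Nat.dvd_gcd (orderOf_dvd_of_pow_eq_one hp2l) (orderOf_dvd_of_pow_eq_one hpm)
  have hgcd2 : Nat.gcd (2 * l) m = n * Nat.gcd 2 k := by
    rw [hla, hmk, show 2 * (n * a) = n * (a * 2) by ring, Nat.gcd_mul_left,
      hcop.gcd_mul_left_cancel 2]
  rcases hyp with ⟨hkodd, hp2⟩ | hkeven
  · -- k odd, p = 2 : d = 1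
    have hg2k : Nat.gcd 2 k = 1 := Nat.coprime_two_left.2 hkodd
    have hordn : orderOf ((p : ZMod d)) ∣ n := by
      rw [hgcd2, hg2k, mul_one] at hord; exact hord
    have hpn : ((p : ZMod d)) ^ n = 1 := orderOf_dvd_iff_pow_eq_one.1 hordn
    have h2 : ((2 : ℕ) : ZMod d) = 0 := by
      have h1 : ((p : ZMod d)) ^ l = 1 := by
        rw [hla, pow_mul, hpn, one_pow]
      rw [h1] at hpl
      push_cast
      linear_combination hpl
    have hd2 : d ∣ 2 := (ZMod.natCast_eq_zero_iff _ _).1 h2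
    have hdodd : ¬ 2 ∣ d := by
      intro h2d
      have hdvd2 : 2 ∣ p ^ m - 1 := h2d.trans hdM
      have hpm2 : p ^ m = 2 ^ m := by rw [hp2]
      have h2m : 2 ∣ 2 ^ m := dvd_pow_self 2 hm.ne'
      have h2m' : 2 ≤ 2 ^ m := Nat.one_lt_two_pow hm.ne'
      rw [hpm2] at hdvd2
      omega
    have hd1 : d = 1 := by
      rcases (Nat.dvd_prime Nat.prime_two).1 hd2 with h | h
      · exact h
      · exact absurd (h ▸ dvd_rfl) hdodd
    rw [hd1, one_mul]
    exact (aux_dvd_pow_sub_one_iff hp1 m).2 (by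
      rw [hmk, pow_mul]
      rw [(aux_dvd_pow_sub_one_iff hp1 n).1 dvd_rfl, one_pow])
  · -- k even
    have hg2k : Nat.gcd 2 k = 2 := Nat.gcd_eq_left hkeven.two_dvd
    have hord2n : orderOf ((p : ZMod d)) ∣ 2 * n := by
      rw [hgcd2, hg2k, mul_comm] at hord; exact hord
    have hp2n : ((p : ZMod d)) ^ (2 * n) = 1 := orderOf_dvd_iff_pow_eq_one.1 hord2n
    have haodd : Odd a := by
      rcases Nat.even_or_odd a with he | ho
      · exact absurd (Nat.dvd_gcd he.two_dvd hkeven.two_dvd) (by rw [hcop]; omega)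
      · exact ho
    obtain ⟨c, hc⟩ := haodd
    have hpn : ((p : ZMod d)) ^ n = -1 := by
      have : ((p : ZMod d)) ^ l = ((p : ZMod d)) ^ n := by
        rw [hla, hc, show n * (2 * c + 1) = (2 * n) * c + n by ring, pow_add, pow_mul,
          hp2n, one_pow, one_mul]
      rw [this] at hpl
      exact hpl
    have hdpn : d ∣ p ^ n + 1 := by
      have : ((p ^ n + 1 : ℕ) : ZMod d) = 0 := by push_cast; rw [hpn]; ring
      exact (ZMod.natCast_eq_zero_iff _ _).1 this
    have hfac : (p ^ n + 1) * (p ^ n - 1) = p ^ (2 * n) - 1 := by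
      have h1 : 1 ≤ p ^ n := Nat.one_le_pow _ _ hp1
      have h2 : 1 ≤ p ^ (2 * n) := Nat.one_le_pow _ _ hp1
      zify [h1, h2]
      rw [two_mul, pow_add]
      ring
    have hstep : (p ^ n + 1) * (p ^ n - 1) ∣ p ^ m - 1 := by
      rw [hfac]
      refine (aux_dvd_pow_sub_one_iff hp1 m).2 ?_
      obtain ⟨k', hk'⟩ := hkeven
      have hm2 : m = (2 * n) * k' := by rw [hmk, hk']; ring
      have base : ((p : ZMod (p ^ (2 * n) - 1))) ^ (2 * n) = 1 :=
        (aux_dvd_pow_sub_one_iff hp1 (2 * n)).1 dvd_rfl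
      calc ((p : ZMod (p ^ (2 * n) - 1))) ^ m
          = (((p : ZMod (p ^ (2 * n) - 1))) ^ (2 * n)) ^ k' := by rw [← pow_mul, ← hm2]
        _ = 1 := by rw [base, one_pow]
    exact dvd_trans (Nat.mul_dvd_mul_right hdpn _) hstep

/-- If `k` is even, or `k` is odd and `p = 2`, the image of `y ↦ y^{p^l+1}` on `F*`
contains `F_{p^n}*`. -/
theorem stmt_7 (p m l n k : ℕ) (hp : p.Prime) (hm : 0 < m) (hl : 0 < l)
    (hn : n = Nat.gcd l m) (hk : k = m / n)
    (hyp : (Odd k ∧ p = 2) ∨ Even k)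
    (F : Type) [Field F] [Fintype F] (hF : Fintype.card F = p ^ m) :
    ∀ b : F, b ≠ 0 → b ^ p ^ n = b → ∃ y : F, y ≠ 0 ∧ y ^ (p ^ l + 1) = b := by
  intro b hb hbn
  classical
  have hp1 : 1 ≤ p := hp.one_le
  have hn0 : 0 < n := hn ▸ Nat.gcd_pos_of_pos_left m hl
  have hpn1 : 2 ≤ p ^ n := by
    calc 2 = 2 ^ 1 := rfl
    _ ≤ p ^ n := Nat.pow_le_pow_left hp.two_le n |>.trans' (Nat.pow_le_pow_right (by norm_num) hn0)
  set M := p ^ m - 1 with hMdef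
  have hM1 : 1 ≤ p ^ m := Nat.one_le_pow _ _ hp.pos
  set N := p ^ l + 1 with hNdef
  set d := Nat.gcd N M with hddef
  have hcard : Fintype.card Fˣ = M := by rw [Fintype.card_units, hF]
  obtain ⟨g, hg⟩ := IsCyclic.exists_generator (α := Fˣ)
  have horder : orderOf g = M := by
    rw [orderOf_eq_card_of_forall_mem_zpowers hg, Nat.card_eq_fintype_card, hcard]
  set bu : Fˣ := Units.mk0 b hb with hbu
  obtain ⟨t, ht⟩ : ∃ t : ℕ, g ^ t = bu := by
    have hmem := hg bu
    rw [← (isOfFinOrder_of_finite g).mem_powers_iff_mem_zpowers] at hmem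
    exact (Submonoid.mem_powers_iff _ _).1 hmem
  -- bu ^ (p^n - 1) = 1
  have hbupow : bu ^ (p ^ n - 1) = 1 := by
    have hb1 : b ^ (p ^ n - 1) = 1 := by
      have : b ^ (p ^ n - 1) * b = 1 * b := by
        rw [one_mul, ← pow_succ, Nat.sub_add_cancel (by omega), hbn]
      exact mul_right_cancel₀ hb this
    ext
    push_cast [hbu]
    exact hb1
  have hMt : M ∣ t * (p ^ n - 1) := by
    rw [← horder]
    apply orderOf_dvd_of_pow_eq_one
    rw [pow_mul, ht, hbupow]
  have hkeydvd : d * (p ^ n - 1) ∣ M := aux_key p m l n k hp hm hl hn hk hyp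
  have hdt : d ∣ t := by
    have h1 : d * (p ^ n - 1) ∣ t * (p ^ n - 1) := hkeydvd.trans hMt
    exact (Nat.mul_dvd_mul_iff_right (by omega : 0 < p ^ n - 1)).1 h1
  -- Bezout over ℤ
  obtain ⟨c, hc⟩ := hdt
  have hbez : (d : ℤ) = N * Nat.gcdA N M + M * Nat.gcdB N M := Nat.gcd_eq_gcd_ab N M
  set x : ℤ := Nat.gcdA N M * c with hx
  have hexp : (N : ℤ) * x = (t : ℤ) - M * (Nat.gcdB N M * c) := by
    have : (t : ℤ) = (d : ℤ) * c := by exact_mod_cast hc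
    rw [this, hbez]; ring
  set u : Fˣ := g ^ x with hu
  have hgM : g ^ (M : ℤ) = 1 := by
    rw [zpow_natCast, ← horder, pow_orderOf_eq_one]
  have hupow : u ^ N = bu := by
    have h1 : u ^ N = g ^ ((N : ℤ) * x) := by
      rw [hu, ← zpow_natCast (g ^ x) N, ← zpow_mul, mul_comm]
    rw [h1, hexp, zpow_sub, zpow_mul, hgM, one_zpow, inv_one, mul_one, zpow_natCast, ht]
  refine ⟨(u : F), Units.ne_zero u, ?_⟩
  have := congrArg (Units.val) hupow
  push_cast at this
  rw [this, hbu]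
  rfl
end

section
/- Let p be an odd prime, F = F_{p^m}, θ(x) = x^{p^l}, n = gcd(l,m), and k = m/n odd. Let γ be a primitive element (generator of F*). Then the subgroup {y^{p^l+1} : y ∈ F*} of F* has index 2, i.e., it equals the set of nonzero squares of F. -/
lemma gcd_aux (p m l n k : ℕ) (hp : p.Prime) (hodd : Odd p) (hm : 0 < m) (hl : 0 < l)
    (hn : n = Nat.gcd l m) (hk : k = m / n) (hkodd : Odd k) :
    Nat.gcd (p ^ l + 1) (p ^ m - 1) = 2 := by
  have hpm1 : 1 ≤ p ^ m := Nat.one_le_pow _ _ hp.pos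
  set d := Nat.gcd (p ^ l + 1) (p ^ m - 1) with hd
  have h1 : d ∣ p ^ l + 1 := Nat.gcd_dvd_left _ _
  have h2 : d ∣ p ^ m - 1 := Nat.gcd_dvd_right _ _
  have hn0 : 0 < n := by rw [hn]; exact Nat.gcd_pos_of_pos_left _ hl
  have hnm : n ∣ m := hn ▸ Nat.gcd_dvd_right l m
  have hnl : n ∣ l := hn ▸ Nat.gcd_dvd_left l m
  have hmnk : m = n * k := by rw [hk, Nat.mul_div_cancel' hnm]
  have h2d : 2 ∣ d := by
    refine Nat.dvd_gcd ?_ ?_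
    · obtain ⟨r, hr⟩ := (hodd.pow : Odd (p ^ l))
      omega
    · obtain ⟨r, hr⟩ := (hodd.pow : Odd (p ^ m))
      omega
  have hdpos : 0 < d := Nat.gcd_pos_of_pos_left _ (Nat.succ_pos _)
  haveI : NeZero d := ⟨hdpos.ne'⟩
  have hd2 : d ∣ 2 := by
    have hcl : ((p : ZMod d)) ^ l = -1 := by
      have h0 : ((p ^ l + 1 : ℕ) : ZMod d) = 0 := (ZMod.natCast_eq_zero_iff _ _).mpr h1
      push_cast at h0
      linear_combination h0
    have hcm : ((p : ZMod d)) ^ m = 1 := by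
      have h0 : ((p ^ m - 1 : ℕ) : ZMod d) = 0 := (ZMod.natCast_eq_zero_iff _ _).mpr h2
      rw [Nat.cast_sub hpm1] at h0
      push_cast at h0
      linear_combination h0
    have hc2l : ((p : ZMod d)) ^ (2 * l) = 1 := by
      rw [mul_comm, pow_mul, hcl]; ring
    have ho : orderOf ((p : ZMod d)) ∣ Nat.gcd (2 * l) m :=
      Nat.dvd_gcd (orderOf_dvd_of_pow_eq_one hc2l) (orderOf_dvd_of_pow_eq_one hcm)
    -- gcd (2l) m ∣ n
    have hgn : Nat.gcd (2 * l) m ∣ n := by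
      have ha : Nat.gcd (2 * l) m ∣ 2 * n := by
        have : Nat.gcd (2 * l) m ∣ Nat.gcd (2 * l) (2 * m) :=
          Nat.dvd_gcd (Nat.gcd_dvd_left _ _) ((Nat.gcd_dvd_right _ _).trans (dvd_mul_left m 2))
        rwa [Nat.gcd_mul_left, ← hn] at this
      have hb : Nat.gcd (2 * l) m ∣ Nat.gcd (2 * n) m :=
        Nat.dvd_gcd ha (Nat.gcd_dvd_right _ _)
      have hc : Nat.gcd (2 * n) m = n := by
        rw [hmnk, mul_comm 2 n, Nat.gcd_mul_left, Nat.Coprime.gcd_eq_one, mul_one]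
        exact (Nat.coprime_two_left).mpr hkodd
      rwa [hc] at hb
    have hol : orderOf ((p : ZMod d)) ∣ l := (ho.trans hgn).trans hnl
    have hcl1 : ((p : ZMod d)) ^ l = 1 := orderOf_dvd_iff_pow_eq_one.mp hol
    have h20 : ((2 : ℕ) : ZMod d) = 0 := by
      have : (-1 : ZMod d) = 1 := hcl ▸ hcl1
      push_cast
      linear_combination -this
    exact (ZMod.natCast_eq_zero_iff _ _).mp h20
  exact Nat.dvd_antisymm hd2 h2d

/-- For `p` odd and `k = m/gcd(l,m)` odd, the image of `y ↦ y^{p^l+1}` on `F*`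
is exactly the set of nonzero squares of `F`. -/
theorem stmt_8 (p m l n k : ℕ) (hp : p.Prime) (hodd : Odd p) (hm : 0 < m) (hl : 0 < l)
    (hn : n = Nat.gcd l m) (hk : k = m / n) (hkodd : Odd k)
    (F : Type) [Field F] [Fintype F] (hF : Fintype.card F = p ^ m) :
    {z : F | ∃ y : F, y ≠ 0 ∧ y ^ (p ^ l + 1) = z} =
      {z : F | ∃ y : F, y ≠ 0 ∧ y ^ 2 = z} := by
  have hgcd := gcd_aux p m l n k hp hodd hm hl hn hk hkodd
  have hpm1 : 1 ≤ p ^ m := Nat.one_le_pow _ _ hp.pos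
  classical
  have hcardU : Fintype.card Fˣ = p ^ m - 1 := by
    rw [Fintype.card_units, hF]
  ext z
  simp only [Set.mem_setOf_eq]
  constructor
  · rintro ⟨y, hy, rfl⟩
    have hev : 2 ∣ p ^ l + 1 := by
      obtain ⟨r, hr⟩ := (hodd.pow : Odd (p ^ l))
      omega
    obtain ⟨s, hs⟩ := hev
    exact ⟨y ^ s, pow_ne_zero _ hy, by rw [← pow_mul, mul_comm, ← hs]⟩
  · rintro ⟨y, hy, rfl⟩
    -- Bezout
    set A := Nat.gcdA (p ^ l + 1) (p ^ m - 1) with hA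
    set B := Nat.gcdB (p ^ l + 1) (p ^ m - 1) with hB
    have hbez : (2 : ℤ) = (p ^ l + 1 : ℕ) * A + (p ^ m - 1 : ℕ) * B := by
      have := Nat.gcd_eq_gcd_ab (p ^ l + 1) (p ^ m - 1)
      rw [hgcd] at this
      exact_mod_cast this
    set u : Fˣ := Units.mk0 y hy with hu
    have hucard : u ^ ((p ^ m - 1 : ℕ) : ℤ) = 1 := by
      rw [zpow_natCast, ← hcardU, pow_card_eq_one]
    refine ⟨((u ^ A : Fˣ) : F), Units.ne_zero _, ?_⟩
    have key : (u ^ A) ^ (p ^ l + 1) = u ^ 2 := by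
      rw [← zpow_natCast (u ^ A) (p ^ l + 1), ← zpow_mul]
      have : (A * ((p ^ l + 1 : ℕ) : ℤ)) = 2 - ((p ^ m - 1 : ℕ) : ℤ) * B := by
        push_cast at hbez ⊢
        linarith
      rw [this, zpow_sub, zpow_mul, hucard, one_zpow, inv_one, mul_one]
      norm_cast
    calc ((u ^ A : Fˣ) : F) ^ (p ^ l + 1) = (((u ^ A) ^ (p ^ l + 1) : Fˣ) : F) := by
          push_cast; ring
      _ = ((u ^ 2 : Fˣ) : F) := by rw [key]
      _ = y ^ 2 := by rw [hu]; simp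
end

section
/- Let p be a prime and n a positive integer. Suppose l = n·r with r odd. Then gcd(p^{2n} + 1, p^l + 1) = gcd(2, p − 1); that is, it equals 1 when p = 2 and equals 2 when p is odd. -/
/-- For `l = n·r` with `r` odd, `gcd(p^{2n}+1, p^l+1) = gcd(2, p−1)`. -/
theorem stmt_10 (p n l r : ℕ) (hp : p.Prime) (hn : 0 < n) (hr : Odd r)
    (hl : l = n * r) :
    Nat.gcd (p ^ (2 * n) + 1) (p ^ l + 1) = Nat.gcd 2 (p - 1) ∧
    Nat.gcd (p ^ (2 * n) + 1) (p ^ l + 1) = if p = 2 then 1 else 2 := by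
  obtain ⟨k, hk⟩ := hr
  subst hl
  set A := p ^ (2 * n) + 1 with hA
  set B := p ^ (n * r) + 1 with hB
  set d := Nat.gcd A B with hd
  have hdA : d ∣ A := Nat.gcd_dvd_left _ _
  have hdB : d ∣ B := Nat.gcd_dvd_right _ _
  have hdpos : 0 < d := Nat.gcd_pos_of_pos_left _ (Nat.succ_pos _)
  haveI : NeZero d := ⟨hdpos.ne'⟩
  have hd2 : d ∣ 2 := by
    have h1 : (p : ZMod d) ^ (2 * n) = -1 := by
      have : ((A : ℕ) : ZMod d) = 0 := (ZMod.natCast_eq_zero_iff _ _).mpr hdA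
      rw [hA] at this
      push_cast at this
      linear_combination this
    have h2 : (p : ZMod d) ^ (n * r) = -1 := by
      have : ((B : ℕ) : ZMod d) = 0 := (ZMod.natCast_eq_zero_iff _ _).mpr hdB
      rw [hB] at this
      push_cast at this
      linear_combination this
    have h3 : (p : ZMod d) ^ (n * r) = ((p : ZMod d) ^ (2 * n)) ^ k * (p : ZMod d) ^ n := by
      rw [← pow_mul, ← pow_add]
      congr 1
      rw [hk]; ring
    rw [h1, h2] at h3
    have h4 : (p : ZMod d) ^ (2 * n) = 1 := by
      have hsq : ((-1 : ZMod d) ^ k * (p : ZMod d) ^ n) ^ 2 = 1 := by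
        rw [← h3]; ring
      have hm1 : ((-1 : ZMod d) ^ k) ^ 2 = 1 := by
        rw [← pow_mul, mul_comm, pow_mul]; simp
      have heq : (p : ZMod d) ^ (2 * n) = ((-1 : ZMod d) ^ k * (p : ZMod d) ^ n) ^ 2 := by
        rw [mul_pow, hm1, one_mul, ← pow_mul, mul_comm n 2]
      rw [heq, hsq]
    have h5 : (2 : ZMod d) = 0 := by
      have := h1.symm.trans h4
      linear_combination -this
    have : ((2 : ℕ) : ZMod d) = 0 := by exact_mod_cast h5
    exact (ZMod.natCast_eq_zero_iff _ _).mp this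
  by_cases hp2 : p = 2
  · subst hp2
    have hAodd : ¬ 2 ∣ A := by
      show ¬ 2 ∣ 2 ^ (2 * n) + 1
      have h := dvd_pow_self 2 (by omega : 2 * n ≠ 0)
      omega
    have hd1 : d = 1 := by
      rcases (Nat.prime_two.eq_one_or_self_of_dvd d hd2) with h | h
      · exact h
      · exact absurd (h ▸ hdA) hAodd
    constructor
    · rw [hd1]; simp
    · rw [hd1]; simp
  · have hpodd : Odd p := hp.odd_of_ne_two hp2
    have h2A : 2 ∣ A := by
      show 2 ∣ p ^ (2 * n) + 1
      obtain ⟨m, hm⟩ : Odd (p ^ (2 * n)) := hpodd.pow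
      omega
    have h2B : 2 ∣ B := by
      show 2 ∣ p ^ (n * r) + 1
      obtain ⟨m, hm⟩ : Odd (p ^ (n * r)) := hpodd.pow
      omega
    have h2d : 2 ∣ d := Nat.dvd_gcd h2A h2B
    have hd2' : d = 2 := Nat.dvd_antisymm hd2 h2d
    have hp3 : 3 ≤ p := by
      have h2 := hp.two_le
      rcases hp.eq_two_or_odd with h | h
      · exact absurd h hp2
      · omega
    have h2p : 2 ∣ p - 1 := by
      obtain ⟨m, hm⟩ := hpodd
      omega
    constructor
    · rw [hd2', Nat.gcd_eq_left h2p]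
    · rw [hd2']; simp [hp2]
end

section
/- Let p be a prime, F = F_{p^m}, θ(x) = x^{p^l}, n = gcd(l,m), k = m/n > 2. For a, b ∈ F*, the inclusion Im(f_{b,θ²}) ⊆ Im(f_{a,θ}) holds if and only if b^{θ⁴}·b^{-1} = a^{θ³}·a^{θ²}·(a·a^θ)^{-1}, where f_{c,σ}(x) = c·x^σ − x·c^σ for a field automorphism σ. -/
/-!
Since `c·σ(x) - x·σ(c) = cσ(c)·(σ(x/c) - x/c)`, the image of `f_{c,σ}` is `cσ(c)·Im(σ - 1)`, so
the inclusion says `γ·Im(σ² - 1) ⊆ Im(σ - 1)` for `γ = bσ²(b)/(aσ(a))`, and the identity on the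
right is `σ²(γ) = γ`. If `σ²(γ) = γ`, then `γ(σ²(y) - y) = (σ - 1)(σ(γy) + γy)`. Conversely, the
trace `T = ∑ σⁱ` vanishes on `Im(σ - 1)` and is `σ`-invariant, so `T((σ²(γ) - γ)·u) = 0` for all
`u`; as `T ≠ 0` by Dedekind's independence of characters, `σ²(γ) = γ`.
-/

open Pointwise

section TwistedDifference

variable {K G : Type*} [Field K] [FunLike G K K] [MonoidWithZeroHomClass G K K]

def twistedDiff (c : K) (σ : G) : K → K := fun x => c * σ x - x * σ c

theorem twistedDiff_apply_eq_smul (σ : G) {c : K} (hc : c ≠ 0) (x : K) :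
    twistedDiff c σ x = (c * σ c) • (σ (x / c) - x / c) := by
  have hσc : σ c ≠ 0 := (map_ne_zero σ).mpr hc
  rw [twistedDiff, map_div₀, smul_eq_mul]
  field_simp

theorem range_twistedDiff (σ : G) {c : K} (hc : c ≠ 0) :
    Set.range (twistedDiff c σ) = (c * σ c) • Set.range (fun x => σ x - x) := by
  have hdiv : Function.Surjective (· / c) := fun y => ⟨y * c, mul_div_cancel_right₀ y hc⟩
  rw [Set.smul_set_range, ← hdiv.range_comp (fun y => (c * σ c) • (σ y - y))]
  exact congrArg Set.range (funext (twistedDiff_apply_eq_smul σ hc))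

end TwistedDifference

section Trace

variable {K : Type*} [Field K]

/-- For `σ` of finite order, the trace from `K` to the fixed field of `σ`. -/
noncomputable def orbitSum (σ : RingAut K) : K →+ K :=
  ∑ i ∈ Finset.range (orderOf σ), (σ ^ i).toAddMonoidHom

theorem orbitSum_apply (σ : RingAut K) (z : K) :
    orbitSum σ z = ∑ i ∈ Finset.range (orderOf σ), (σ ^ i) z := by
  simp [orbitSum]

theorem orbitSum_map (σ : RingAut K) (z : K) : orbitSum σ (σ z) = orbitSum σ z := by
  have hsucc := Finset.sum_range_succ (fun i => (σ ^ i) z) (orderOf σ)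
  have hsucc' := Finset.sum_range_succ' (fun i => (σ ^ i) z) (orderOf σ)
  rw [pow_orderOf_eq_one] at hsucc
  simp only [pow_succ, pow_zero, RingAut.mul_apply, RingAut.one_apply] at hsucc hsucc'
  rw [orbitSum_apply, orbitSum_apply]
  linear_combination hsucc'.symm.trans hsucc

theorem orbitSum_map_sq (σ : RingAut K) (z : K) : orbitSum σ ((σ ^ 2) z) = orbitSum σ z := by
  rw [sq, RingAut.mul_apply, orbitSum_map, orbitSum_map]

theorem orbitSum_map_sub_self (σ : RingAut K) (z : K) : orbitSum σ (σ z - z) = 0 := by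
  rw [map_sub, orbitSum_map, sub_self]

theorem exists_orbitSum_ne_zero {σ : RingAut K} (hσ : IsOfFinOrder σ) :
    ∃ w, orbitSum σ w ≠ 0 := by
  by_contra! h
  let χ : Fin (orderOf σ) → (K →* K) := fun i => (σ ^ (i : ℕ) : K ≃+* K).toMonoidHom
  have hχ : Function.Injective χ := fun i j hij => Fin.ext <|
    pow_injOn_Iio_orderOf i.isLt j.isLt <| RingEquiv.ext fun x => DFunLike.congr_fun hij x
  have hsum : ∑ i, (1 : K) • (χ i : K → K) = 0 := by
    funext w
    have hw := h w
    rw [orbitSum_apply, ← Fin.sum_univ_eq_sum_range] at hw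
    simpa [χ] using hw
  exact one_ne_zero <| Fintype.linearIndependent_iff.mp
    ((linearIndependent_monoidHom K K).comp χ hχ) _ hsum ⟨0, hσ.orderOf_pos⟩

theorem smul_range_apply_sq_sub_subset_iff {σ : RingAut K} (hσ : IsOfFinOrder σ) (γ : K) :
    γ • Set.range (fun y => (σ ^ 2) y - y) ⊆ Set.range (fun x => σ x - x) ↔ (σ ^ 2) γ = γ := by
  rw [Set.smul_set_range, Set.range_subset_iff]
  constructor
  · intro h
    have hvanish : ∀ y, orbitSum σ (((σ ^ 2) γ - γ) * (σ ^ 2) y) = 0 := fun y => by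
      obtain ⟨x, hx⟩ := h y
      have hT : orbitSum σ (γ • ((σ ^ 2) y - y)) = 0 := hx ▸ orbitSum_map_sub_self σ x
      rw [smul_eq_mul, mul_sub, map_sub, sub_eq_zero] at hT
      rw [sub_mul, map_sub, hT, ← orbitSum_map_sq σ (γ * y), map_mul (σ ^ 2), sub_self]
    by_contra hne
    obtain ⟨w, hw⟩ := exists_orbitSum_ne_zero hσ
    have hw0 := hvanish ((σ ^ 2).symm (((σ ^ 2) γ - γ)⁻¹ * w))
    rw [RingEquiv.apply_symm_apply, mul_inv_cancel_left₀ (sub_ne_zero.mpr hne)] at hw0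
    exact hw hw0
  · intro hγ y
    refine ⟨σ (γ * y) + γ * y, ?_⟩
    change σ (σ (γ * y) + γ * y) - (σ (γ * y) + γ * y) = _
    rw [map_add, ← RingAut.mul_apply, ← sq, map_mul, hγ, smul_eq_mul]
    ring

theorem range_twistedDiff_sq_subset_iff {σ : RingAut K} (hσ : IsOfFinOrder σ) {a b : K}
    (ha : a ≠ 0) (hb : b ≠ 0) :
    Set.range (twistedDiff b (σ ^ 2)) ⊆ Set.range (twistedDiff a σ) ↔
      (σ ^ 4) b * b⁻¹ = (σ ^ 3) a * (σ ^ 2) a * (a * σ a)⁻¹ := by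
  have hne : ∀ (τ : RingAut K) {c : K}, c ≠ 0 → τ c ≠ 0 := fun τ _ hc => (map_ne_zero τ).mpr hc
  have haσ : a * σ a ≠ 0 := mul_ne_zero ha (hne σ ha)
  rw [range_twistedDiff _ hb, range_twistedDiff _ ha, Set.subset_smul_set_iff₀ haσ, smul_smul,
    smul_range_apply_sq_sub_subset_iff hσ]
  simp only [map_mul, map_inv₀, ← RingAut.mul_apply, ← pow_succ, ← pow_add, Nat.reduceAdd]
  field_simp [hne σ ha, hne (σ ^ 2) ha, hne (σ ^ 3) ha, hne (σ ^ 2) hb, hne (σ ^ 4) hb]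
  exact ⟨fun h => mul_left_cancel₀ (hne (σ ^ 2) hb) (by linear_combination h),
    fun h => by linear_combination (σ ^ 2) b * h⟩

end Trace

theorem iterateFrobeniusEquiv_pow_apply (R : Type*) [CommSemiring R] (p : ℕ) [ExpChar R p]
    [PerfectRing R p] (l j : ℕ) (x : R) :
    (iterateFrobeniusEquiv R p l ^ j) x = x ^ p ^ (j * l) := by
  rw [iterateFrobeniusEquiv_eq_pow, ← pow_mul, mul_comm, ← iterateFrobeniusEquiv_eq_pow,
    iterateFrobeniusEquiv_def]

theorem stmt_12_general (p m l : ℕ) (hp : p.Prime)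
    (F : Type) [Field F] [Fintype F] (hF : Fintype.card F = p ^ m)
    (a b : F) (ha : a ≠ 0) (hb : b ≠ 0) :
    Set.range (fun x : F => b * x ^ p ^ (2 * l) - x * b ^ p ^ (2 * l)) ⊆
      Set.range (fun x : F => a * x ^ p ^ l - x * a ^ p ^ l) ↔
    b ^ p ^ (4 * l) * b⁻¹ = a ^ p ^ (3 * l) * a ^ p ^ (2 * l) * (a * a ^ p ^ l)⁻¹ := by
  have : Fact p.Prime := ⟨hp⟩
  have : CharP F p := charP_of_card_eq_prime_pow hF
  have : Finite (RingAut F) := Finite.of_injective _ DFunLike.coe_injective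
  have key :=
    range_twistedDiff_sq_subset_iff (isOfFinOrder_of_finite (iterateFrobeniusEquiv F p l)) ha hb
  unfold twistedDiff at key
  simpa only [iterateFrobeniusEquiv_pow_apply, iterateFrobeniusEquiv_def] using key

/-- For `k > 2`, `Im(f_{b,θ²}) ⊆ Im(f_{a,θ})` iff
`b^{θ⁴}·b⁻¹ = a^{θ³}·a^{θ²}·(a·a^θ)⁻¹`. -/
theorem stmt_12 (p m l n k : ℕ) (hp : p.Prime) (hm : 0 < m) (hl : 0 < l)
    (hn : n = Nat.gcd l m) (hk : k = m / n) (hk2 : 2 < k)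
    (F : Type) [Field F] [Fintype F] (hF : Fintype.card F = p ^ m)
    (a b : F) (ha : a ≠ 0) (hb : b ≠ 0) :
    Set.range (fun x : F => b * x ^ p ^ (2 * l) - x * b ^ p ^ (2 * l)) ⊆
      Set.range (fun x : F => a * x ^ p ^ l - x * a ^ p ^ l) ↔
    b ^ p ^ (4 * l) * b⁻¹ = a ^ p ^ (3 * l) * a ^ p ^ (2 * l) * (a * a ^ p ^ l)⁻¹ :=
  stmt_12_general p m l hp F hF a b ha hb
end

section
/- Let p be a prime, F = F_{p^m}, θ(x) = x^{p^l}, n = gcd(l,m), k = m/n with k/2 an even integer (so 4 | k). Let γ be a generator of F*. Then there exists b ∈ F* with Im(f_{b,θ²}) ⊆ Im(f_{a,θ}) if and only if a lies in the subgroup generated by γ^{(p^{2n}+1)/gcd(2,p−1)}; and when such b exists, there are exactly p^{4n} − 1 of them. -/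
/-!
Write `σ = θ`. Substituting `x = a z` gives `Im f_{a,σ} = a σ(a) · Im(σ - 1)`, so the inclusion
says `c · Im(σ² - 1) ⊆ Im(σ - 1)` for `c = b σ²(b) / (a σ(a))`. The trace `∑_{i < ord σ} σ^i` kills
`Im(σ - 1)` and is not identically zero (Dedekind's independence of characters), which forces
`σ²(c) = c`; conversely `v = σ(c z) + c z` solves `σ v - v = c (σ² z - z)`.

In the cyclic group `F*` of order `N = p^m - 1` the condition `σ²(c) = c` is the equation
`b^E = a^{(p^l + 1)(p^{2l} - 1)}` with `E = p^{4l} - 1`, solvable iff `gcd(E, N) = p^{4n} - 1`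
divides the exponent of the right-hand side, and then with `gcd(E, N)` solutions. For `x = p^n`
and `l/n` odd, `(x^{2l/n} - 1)/(x² - 1) ≡ 1 mod x² + 1` and
`gcd(x² + 1, x^{l/n} + 1) = gcd(2, x - 1)`, which turns that divisibility into
`a ∈ ⟨γ^{(x² + 1)/gcd(2, p - 1)}⟩`.
-/

open Finset

theorem Nat.dvd_mul_iff_div_gcd_dvd {g y j : ℕ} (hg : 0 < g) : g ∣ j * y ↔ g / g.gcd y ∣ j := by
  obtain ⟨g', y', hco, hg', hy'⟩ := Nat.exists_coprime g y
  set d := g.gcd y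
  have hd : 0 < d := Nat.gcd_pos_of_pos_left y hg
  rw [hg', hy', ← mul_assoc, Nat.mul_dvd_mul_iff_right hd, Nat.mul_div_cancel _ hd,
    hco.dvd_mul_right]

theorem Nat.gcd_mul_left_eq_of_dvd_div_gcd {c l m : ℕ} (hl : 0 < l) (hc : c ∣ m / l.gcd m) :
    (c * l).gcd m = c * l.gcd m := by
  obtain ⟨l', k, hco, hl', hm⟩ := Nat.exists_coprime l m
  set n := l.gcd m
  have hn : 0 < n := Nat.gcd_pos_of_pos_left m hl
  rw [hm, Nat.mul_div_cancel _ hn] at hc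
  rw [hl', hm, ← mul_assoc, Nat.gcd_mul_right, hco.gcd_mul_right_cancel, Nat.gcd_eq_left hc]

theorem Nat.odd_div_gcd {l m : ℕ} (hl : 0 < l) (h : 2 ∣ m / l.gcd m) : Odd (l / l.gcd m) :=
  Nat.coprime_two_right.mp <|
    (Nat.coprime_div_gcd_div_gcd (Nat.gcd_pos_of_pos_left m hl)).coprime_dvd_right h

theorem Nat.sq_sub_one (y : ℕ) : y ^ 2 - 1 = (y + 1) * (y - 1) := by
  simpa using Nat.sq_sub_sq y 1

theorem Nat.gcd_two_pow_sub_one {p n : ℕ} (hn : n ≠ 0) :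
    Nat.gcd 2 (p ^ n - 1) = Nat.gcd 2 (p - 1) := by
  have hmod : p ^ n % 2 = p % 2 := by
    rcases Nat.mod_two_eq_zero_or_one p with h | h <;> simp [Nat.pow_mod, h, hn]
  have hpos : 0 < p → 0 < p ^ n := fun hp => pow_pos hp n
  have hzero : p = 0 → p ^ n = 0 := fun hp => by simp [hp, hn]
  rw [Nat.gcd_rec, Nat.gcd_rec 2 (p - 1)]
  congr 1
  omega

theorem Nat.gcd_two_sub_one_dvd_pow_add_one {x : ℕ} (hx : 1 ≤ x) (n : ℕ) :
    Nat.gcd 2 (x - 1) ∣ x ^ n + 1 := by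
  rw [show x ^ n + 1 = (x ^ n - 1) + 2 by have := Nat.one_le_pow n x hx; omega]
  exact dvd_add ((Nat.gcd_dvd_right _ _).trans (Nat.sub_one_dvd_pow_sub_one x n))
    (Nat.gcd_dvd_left _ _)

theorem gcd_sq_add_one_pow_add_one {x l : ℕ} (hx : 1 ≤ x) (hl : Odd l) :
    (x ^ 2 + 1).gcd (x ^ l + 1) = Nat.gcd 2 (x - 1) := by
  set d := (x ^ 2 + 1).gcd (x ^ l + 1)
  have hd4 : d ∣ x ^ 4 - 1 := by
    rw [show x ^ 4 = (x ^ 2) ^ 2 by ring, Nat.sq_sub_one]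
    exact (Nat.gcd_dvd_left _ _).mul_right _
  have hd2l : d ∣ x ^ (2 * l) - 1 := by
    rw [mul_comm, pow_mul, Nat.sq_sub_one]
    exact (Nat.gcd_dvd_right _ _).mul_right _
  have hd2 : d ∣ x ^ 2 - 1 := by
    have h := Nat.dvd_gcd hd4 hd2l
    rwa [Nat.pow_sub_one_gcd_pow_sub_one, show Nat.gcd 4 (2 * l) = 2 by
      rw [show 4 = 2 * 2 by rfl, Nat.gcd_mul_left, Nat.coprime_two_left.mpr hl]] at h
  have hx2 : 1 ≤ x ^ 2 := Nat.one_le_pow _ _ hx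
  have hd_two : d ∣ 2 := by
    have h := Nat.dvd_sub (Nat.gcd_dvd_left _ _) hd2
    rwa [show x ^ 2 + 1 - (x ^ 2 - 1) = 2 by omega] at h
  apply Nat.dvd_antisymm
  · rcases (Nat.dvd_prime Nat.prime_two).mp hd_two with h | h
    · rw [h]
      exact one_dvd _
    · have hodd : Odd x := by
        have h2 : d ∣ x ^ 2 + 1 := Nat.gcd_dvd_left _ _
        rw [h] at h2
        simpa [← even_iff_two_dvd, Nat.even_add_one, Nat.even_pow] using h2
      obtain ⟨r, rfl⟩ := hodd
      rw [h]
      exact Nat.dvd_gcd dvd_rfl ⟨r, by omega⟩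
  · exact Nat.dvd_gcd (Nat.gcd_two_sub_one_dvd_pow_add_one hx 2)
      (Nat.gcd_two_sub_one_dvd_pow_add_one hx l)

theorem coprime_sq_add_one_geom_sum {x l : ℕ} (hl : Odd l) :
    (x ^ 2 + 1).Coprime (∑ i ∈ range l, (x ^ 2) ^ i) := by
  have hx : ((x : ZMod (x ^ 2 + 1))) ^ 2 = -1 := by
    have h := ZMod.natCast_self (x ^ 2 + 1)
    push_cast at h
    exact eq_neg_of_add_eq_zero_left h
  have hs : ((∑ i ∈ range l, (x ^ 2) ^ i : ℕ) : ZMod (x ^ 2 + 1)) = 1 := by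
    push_cast
    rw [hx, neg_one_geom_sum, if_neg (Nat.not_even_iff_odd.mpr hl)]
  exact ((ZMod.isUnit_iff_coprime _ _).mp (hs ▸ isUnit_one)).symm

theorem pow_four_sub_one_dvd_mul_iff {x l j : ℕ} (hx : 2 ≤ x) (hl : Odd l) :
    x ^ 4 - 1 ∣ j * ((x ^ l + 1) * (x ^ (2 * l) - 1)) ↔ (x ^ 2 + 1) / Nat.gcd 2 (x - 1) ∣ j := by
  set s := ∑ i ∈ range l, (x ^ 2) ^ i
  have hx2 : 4 ≤ x ^ 2 := by nlinarith
  have h4 : x ^ 4 - 1 = (x ^ 2 - 1) * (x ^ 2 + 1) := by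
    rw [show x ^ 4 = (x ^ 2) ^ 2 by ring, Nat.sq_sub_one, mul_comm]
  have h2l : x ^ (2 * l) - 1 = (x ^ 2 - 1) * s := by
    rw [pow_mul, ← geom_sum_mul_of_one_le (by omega) l, mul_comm]
  rw [h4, h2l, show j * ((x ^ l + 1) * ((x ^ 2 - 1) * s)) = (x ^ 2 - 1) * (j * (x ^ l + 1) * s) by
      ring, Nat.mul_dvd_mul_iff_left (by omega), (coprime_sq_add_one_geom_sum hl).dvd_mul_right,
    Nat.dvd_mul_iff_div_gcd_dvd (by omega), gcd_sq_add_one_pow_add_one (by omega) hl]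

theorem pow_four_mul_sub_one_dvd_mul_iff {p n l j : ℕ} (hp : 2 ≤ p) (hn : 0 < n) (hnl : n ∣ l)
    (hl : Odd (l / n)) :
    p ^ (4 * n) - 1 ∣ j * ((p ^ l + 1) * (p ^ (2 * l) - 1)) ↔
      (p ^ (2 * n) + 1) / Nat.gcd 2 (p - 1) ∣ j := by
  obtain ⟨l', rfl⟩ := hnl
  rw [Nat.mul_div_cancel_left _ hn] at hl
  have hx : 2 ≤ p ^ n := hp.trans (Nat.le_self_pow hn.ne' p)
  rw [← Nat.gcd_two_pow_sub_one hn.ne', show p ^ (4 * n) = (p ^ n) ^ 4 by ring,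
    show p ^ (n * l') = (p ^ n) ^ l' by ring, show p ^ (2 * (n * l')) = (p ^ n) ^ (2 * l') by ring,
    show p ^ (2 * n) = (p ^ n) ^ 2 by ring, pow_four_sub_one_dvd_mul_iff hx hl]

theorem gcd_pow_add_one_mul_pow_sub_one (p l m : ℕ) :
    ((p ^ (2 * l) + 1) * (p ^ (2 * l) - 1)).gcd (p ^ m - 1) = p ^ (4 * l).gcd m - 1 := by
  rw [← Nat.sq_sub_one, ← pow_mul, show 2 * l * 2 = 4 * l by ring,
    Nat.pow_sub_one_gcd_pow_sub_one]

theorem pow_add_one_div_gcd_two_dvd_pow_sub_one {p n m : ℕ} (hp : 1 ≤ p) (h : 4 * n ∣ m) :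
    (p ^ (2 * n) + 1) / Nat.gcd 2 (p - 1) ∣ p ^ m - 1 := by
  refine (Nat.div_dvd_of_dvd (Nat.gcd_two_sub_one_dvd_pow_add_one hp _)).trans <|
    (dvd_mul_right _ (p ^ (2 * n) - 1)).trans ?_
  rw [← Nat.sq_sub_one, ← pow_mul, show 2 * n * 2 = 4 * n by ring]
  exact Nat.pow_sub_one_dvd_pow_sub_one p h

section CyclicGroup

variable {G : Type*}

theorem pow_mem_zpowers_pow_iff [Group G] (g : G) (E j : ℕ) :
    g ^ j ∈ Subgroup.zpowers (g ^ E) ↔ E.gcd (orderOf g) ∣ j := by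
  rw [← Int.gcd_natCast_natCast, Int.gcd_dvd_iff, Subgroup.mem_zpowers_iff]
  simp only [← zpow_natCast, ← zpow_mul, zpow_eq_zpow_iff_modEq, Int.modEq_iff_dvd]
  constructor
  · rintro ⟨s, t, ht⟩
    exact ⟨s, t, by linarith⟩
  · rintro ⟨s, t, ht⟩
    exact ⟨s, t, by linarith⟩

theorem exists_pow_eq_iff_mem_zpowers [Group G] {γ : G} (hγ : ∀ u, u ∈ Subgroup.zpowers γ)
    (E : ℕ) (y : G) : (∃ u, u ^ E = y) ↔ y ∈ Subgroup.zpowers (γ ^ E) := by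
  rw [Subgroup.mem_zpowers_iff]
  constructor
  · rintro ⟨u, rfl⟩
    obtain ⟨s, rfl⟩ := Subgroup.mem_zpowers_iff.mp (hγ u)
    exact ⟨s, by simp only [← zpow_natCast, ← zpow_mul, mul_comm]⟩
  · rintro ⟨s, rfl⟩
    exact ⟨γ ^ s, by simp only [← zpow_natCast, ← zpow_mul, mul_comm]⟩

theorem card_pow_eq [CommGroup G] [IsCyclic G] [Finite G] (E : ℕ) {y : G}
    (hy : ∃ u, u ^ E = y) : Nat.card {u : G // u ^ E = y} = (Nat.card G).gcd E := by
  obtain ⟨u₀, rfl⟩ := hy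
  rw [← IsCyclic.card_powMonoidHom_ker]
  exact Nat.card_congr ((powMonoidHom E).fiberEquivKer u₀)

end CyclicGroup

def subtypeNeZeroAndEquivUnits {G₀ : Type*} [GroupWithZero G₀] {P : G₀ → Prop}
    {Q : G₀ˣ → Prop} (h : ∀ u : G₀ˣ, P u ↔ Q u) : {b : G₀ // b ≠ 0 ∧ P b} ≃ {u : G₀ˣ // Q u} :=
  (Equiv.subtypeSubtypeEquivSubtypeInter (· ≠ 0) P).symm.trans
    (Equiv.subtypeEquiv unitsEquivNeZero.symm fun b => h (unitsEquivNeZero.symm b))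

section AutTrace

variable {K : Type*} [Field K] (σ : K ≃+* K)

noncomputable def autTrace : K →+ K := ∑ i ∈ range (orderOf σ), (σ ^ i).toAddMonoidHom

theorem autTrace_apply (x : K) : autTrace σ x = ∑ i ∈ range (orderOf σ), (σ ^ i) x := by
  simp only [autTrace, AddMonoidHom.finsetSum_apply]
  rfl

theorem autTrace_map (x : K) : autTrace σ (σ x) = autTrace σ x := by
  have hshift := sum_range_succ' (fun i => (σ ^ i) x) (orderOf σ)
  rw [sum_range_succ, pow_orderOf_eq_one] at hshift
  simp only [pow_succ, RingAut.mul_apply, pow_zero, RingAut.one_apply] at hshift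
  rw [autTrace_apply, autTrace_apply]
  exact add_right_cancel hshift.symm

theorem exists_autTrace_ne_zero (hσ : IsOfFinOrder σ) : ∃ x, autTrace σ x ≠ 0 := by
  by_contra! h
  set k := orderOf σ
  let χ : Fin k → (K →* K) := fun i => ((σ ^ (i : ℕ) : K ≃+* K) : K →* K)
  have hχ : Function.Injective χ := fun i j hij => Fin.ext <|
    pow_injOn_Iio_orderOf i.2 j.2 (RingEquiv.ext fun x => DFunLike.congr_fun hij x)
  have hsum : ∑ i, (1 : K) • (χ i : K → K) = 0 := by
    funext x
    simp only [one_smul, Finset.sum_apply, χ, MonoidHom.coe_coe, Pi.zero_apply]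
    rw [Fin.sum_univ_eq_sum_range (fun i => (σ ^ i) x), ← autTrace_apply, h]
  exact one_ne_zero <| Fintype.linearIndependent_iff.mp
    ((linearIndependent_monoidHom K K).comp χ hχ) _ hsum ⟨0, hσ.orderOf_pos⟩

theorem range_mul_sub_subset_range_sub_iff (hσ : IsOfFinOrder σ) (c : K) :
    Set.range (fun z => c * (σ (σ z) - z)) ⊆ Set.range (fun v => σ v - v) ↔ σ (σ c) = c := by
  constructor
  · intro h
    set c' := σ.symm (σ.symm c)
    have hT : ∀ z, autTrace σ ((c' - c) * z) = 0 := by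
      intro z
      obtain ⟨v, hv⟩ := h ⟨z, rfl⟩
      have hc : c * σ (σ z) = σ (σ (c' * z)) := by simp [c']
      have := congrArg (autTrace σ) hv
      simp only at this
      rw [map_sub, autTrace_map, sub_self, mul_sub, map_sub, hc, autTrace_map, autTrace_map]
        at this
      rw [sub_mul, map_sub]
      exact this.symm
    have hc' : c' = c := by
      by_contra hne
      obtain ⟨x, hx⟩ := exists_autTrace_ne_zero σ hσ
      have := hT ((c' - c)⁻¹ * x)
      rw [← mul_assoc, mul_inv_cancel₀ (sub_ne_zero.mpr hne), one_mul] at this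
      exact hx this
    nth_rewrite 1 [← hc']
    simp only [c', RingEquiv.apply_symm_apply]
  · rintro hc _ ⟨z, rfl⟩
    refine ⟨σ (c * z) + c * z, ?_⟩
    simp only [map_add, map_mul, hc]
    ring

theorem range_mul_map_sub_mul_map (τ : K →* K) {a : K} (ha : a ≠ 0) :
    Set.range (fun x => a * τ x - x * τ a) = Set.range (fun z => a * τ a * (τ z - z)) := by
  ext y
  constructor
  · rintro ⟨x, rfl⟩
    refine ⟨a⁻¹ * x, ?_⟩
    have : τ a * τ a⁻¹ = 1 := by rw [← map_mul, mul_inv_cancel₀ ha, map_one]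
    simp only [map_mul]
    linear_combination (a * τ x) * this - (τ a * x) * mul_inv_cancel₀ ha
  · rintro ⟨z, rfl⟩
    exact ⟨a * z, by simp only [map_mul]; ring⟩

theorem range_sq_subset_range_iff (hσ : IsOfFinOrder σ) {a b : K} (ha : a ≠ 0) (hb : b ≠ 0) :
    Set.range (fun x => b * σ (σ x) - x * σ (σ b)) ⊆ Set.range (fun x => a * σ x - x * σ a) ↔
      σ (σ (b * σ (σ b) / (a * σ a))) = b * σ (σ b) / (a * σ a) := by
  have hA : a * σ a ≠ 0 := mul_ne_zero ha ((map_ne_zero σ).mpr ha)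
  have hrange_a := range_mul_map_sub_mul_map (σ : K →* K) ha
  have hrange_b := range_mul_map_sub_mul_map ((σ * σ : K ≃+* K) : K →* K) hb
  simp only [MonoidHom.coe_coe, RingAut.mul_apply] at hrange_a hrange_b
  rw [hrange_a, hrange_b, ← range_mul_sub_subset_range_sub_iff σ hσ]
  simp only [Set.range_subset_iff, Set.mem_range]
  refine forall_congr' fun z => exists_congr fun v => ?_
  rw [div_mul_eq_mul_div, eq_div_iff hA, mul_comm]

end AutTrace

theorem range_frobenius_sq_subset_iff {F : Type*} [Field F] [Finite F] (p : ℕ) [Fact p.Prime]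
    [CharP F p] (l : ℕ) (a b : Fˣ) :
    Set.range (fun x : F => b * x ^ p ^ (2 * l) - x * b ^ p ^ (2 * l)) ⊆
        Set.range (fun x : F => a * x ^ p ^ l - x * a ^ p ^ l) ↔
      b ^ ((p ^ (2 * l) + 1) * (p ^ (2 * l) - 1)) = a ^ ((p ^ l + 1) * (p ^ (2 * l) - 1)) := by
  have hσσ : ∀ x : F, iterateFrobeniusEquiv F p l (iterateFrobeniusEquiv F p l x) =
      x ^ p ^ (2 * l) := fun x => by
    rw [iterateFrobeniusEquiv_def, iterateFrobeniusEquiv_def, ← pow_mul, ← pow_add, two_mul]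
  have hσ : IsOfFinOrder (iterateFrobeniusEquiv F p l) :=
    have : Finite (F ≃+* F) := Finite.of_injective _ DFunLike.coe_injective
    isOfFinOrder_of_finite _
  have key := range_sq_subset_range_iff _ hσ a.ne_zero b.ne_zero
  simp only [hσσ] at key
  simp only [iterateFrobeniusEquiv_def] at key
  rw [key]
  set u : Fˣ := b ^ (p ^ (2 * l) + 1) * (a ^ (p ^ l + 1))⁻¹
  have hu : (b : F) * b ^ p ^ (2 * l) / (a * a ^ p ^ l) = u := by
    simp only [u, Units.val_mul, Units.val_pow_eq_pow_val, Units.val_inv_eq_inv_val]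
    rw [pow_succ', pow_succ', div_eq_mul_inv]
  have hQ : 1 ≤ p ^ (2 * l) := Nat.one_le_pow _ _ (Fact.out : p.Prime).pos
  rw [hu, ← Units.val_pow_eq_pow_val, Units.val_inj, ← Nat.sub_add_cancel hQ, pow_succ,
    mul_eq_right, Nat.sub_add_cancel hQ, mul_pow, inv_pow, ← pow_mul, ← pow_mul, mul_inv_eq_one]

theorem stmt_14_general (p m l n k : ℕ) (hp : p.Prime) (hl : 0 < l)
    (hn : n = Nat.gcd l m) (hk : k = m / n) (hk4 : 4 ∣ k)
    (F : Type) [Field F] [Fintype F] (hF : Fintype.card F = p ^ m)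
    (γ : Fˣ) (hγ : ∀ u : Fˣ, u ∈ Subgroup.zpowers γ)
    (a : Fˣ) :
    ((∃ b : F, b ≠ 0 ∧
        Set.range (fun x : F => b * x ^ p ^ (2 * l) - x * b ^ p ^ (2 * l)) ⊆
          Set.range (fun x : F => (a : F) * x ^ p ^ l - x * (a : F) ^ p ^ l)) ↔
      a ∈ Subgroup.zpowers (γ ^ ((p ^ (2 * n) + 1) / Nat.gcd 2 (p - 1)))) ∧
    (a ∈ Subgroup.zpowers (γ ^ ((p ^ (2 * n) + 1) / Nat.gcd 2 (p - 1))) →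
      Nat.card {b : F // b ≠ 0 ∧
        Set.range (fun x : F => b * x ^ p ^ (2 * l) - x * b ^ p ^ (2 * l)) ⊆
          Set.range (fun x : F => (a : F) * x ^ p ^ l - x * (a : F) ^ p ^ l)}
        = p ^ (4 * n) - 1) := by
  have : Fact p.Prime := ⟨hp⟩
  have : CharP F p := charP_of_card_eq_prime_pow hF
  subst hk
  have hn0 : 0 < n := hn ▸ Nat.gcd_pos_of_pos_left m hl
  have hodd : Odd (l / n) := hn ▸ Nat.odd_div_gcd hl (hn ▸ (dvd_trans ⟨2, rfl⟩ hk4))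
  have hgcd4 : (4 * l).gcd m = 4 * n := hn ▸ Nat.gcd_mul_left_eq_of_dvd_div_gcd hl (hn ▸ hk4)
  have hcard : Nat.card Fˣ = p ^ m - 1 := by rw [Nat.card_units, Nat.card_eq_fintype_card, hF]
  have hE : ((p ^ (2 * l) + 1) * (p ^ (2 * l) - 1)).gcd (p ^ m - 1) = p ^ (4 * n) - 1 := by
    rw [gcd_pow_add_one_mul_pow_sub_one, hgcd4]
  have hD := pow_add_one_div_gcd_two_dvd_pow_sub_one hp.one_le (hgcd4 ▸ Nat.gcd_dvd_right _ m)
  obtain ⟨j, rfl⟩ := (Submonoid.mem_powers_iff _ _).mp (mem_powers_iff_mem_zpowers.mpr (hγ a))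
  have hsolvable : (∃ u : Fˣ, u ^ ((p ^ (2 * l) + 1) * (p ^ (2 * l) - 1)) =
      (γ ^ j) ^ ((p ^ l + 1) * (p ^ (2 * l) - 1))) ↔
      γ ^ j ∈ Subgroup.zpowers (γ ^ ((p ^ (2 * n) + 1) / Nat.gcd 2 (p - 1))) := by
    rw [exists_pow_eq_iff_mem_zpowers hγ, ← pow_mul, pow_mem_zpowers_pow_iff,
      pow_mem_zpowers_pow_iff, orderOf_eq_card_of_forall_mem_zpowers hγ, hcard, hE,
      Nat.gcd_eq_left hD,
      pow_four_mul_sub_one_dvd_mul_iff hp.two_le hn0 (hn ▸ Nat.gcd_dvd_left l m) hodd]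
  refine ⟨?_, fun h => ?_⟩
  · rw [← hsolvable, ← nonempty_subtype, ← nonempty_subtype]
    exact (subtypeNeZeroAndEquivUnits (range_frobenius_sq_subset_iff p l (γ ^ j))).nonempty_congr
  · refine (Nat.card_congr
      (subtypeNeZeroAndEquivUnits (range_frobenius_sq_subset_iff p l (γ ^ j)))).trans ?_
    rw [card_pow_eq _ (hsolvable.mpr h), hcard, Nat.gcd_comm, hE]

/-- For `4 ∣ k` and `γ` a generator of `F*`: there exists nonzero `b` with
`Im(f_{b,θ²}) ⊆ Im(f_{a,θ})` iff `a ∈ ⟨γ^{(p^{2n}+1)/gcd(2,p−1)}⟩`, and in that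
case there are exactly `p^{4n} − 1` such `b`. -/
theorem stmt_14 (p m l n k : ℕ) (hp : p.Prime) (hm : 0 < m) (hl : 0 < l)
    (hn : n = Nat.gcd l m) (hk : k = m / n) (hk4 : 4 ∣ k)
    (F : Type) [Field F] [Fintype F] (hF : Fintype.card F = p ^ m)
    (γ : Fˣ) (hγ : ∀ u : Fˣ, u ∈ Subgroup.zpowers γ)
    (a : Fˣ) :
    ((∃ b : F, b ≠ 0 ∧
        Set.range (fun x : F => b * x ^ p ^ (2 * l) - x * b ^ p ^ (2 * l)) ⊆
          Set.range (fun x : F => (a : F) * x ^ p ^ l - x * (a : F) ^ p ^ l)) ↔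
      a ∈ Subgroup.zpowers (γ ^ ((p ^ (2 * n) + 1) / Nat.gcd 2 (p - 1)))) ∧
    (a ∈ Subgroup.zpowers (γ ^ ((p ^ (2 * n) + 1) / Nat.gcd 2 (p - 1))) →
      Nat.card {b : F // b ≠ 0 ∧
        Set.range (fun x : F => b * x ^ p ^ (2 * l) - x * b ^ p ^ (2 * l)) ⊆
          Set.range (fun x : F => (a : F) * x ^ p ^ l - x * (a : F) ^ p ^ l)}
        = p ^ (4 * n) - 1) :=
  stmt_14_general p m l n k hp hl hn hk hk4 F hF γ hγ a
end

section
/- Let p be an odd prime, F = F_{p^m}, θ(x) = x^{p^l}, n = gcd(l,m), k = m/n odd. For every v ∈ F*, the set {v·a^{1+p^l} : a ∈ F*, Im(f_{a,θ}) ⊆ Ker(ψ_v)} equals the set of nonzero squares of F_{p^n} if v is a square in F*, and the set of non-squares of F_{p^n}* if v is a non-square in F*. -/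
open Finset Polynomial

lemma iterFix {M : Type*} [Monoid M] {z : M} {b : ℕ} (h : z ^ b = z) :
    ∀ t, z ^ b ^ t = z := by
  intro t
  induction t with
  | zero => simp
  | succ t ih => rw [pow_succ, pow_mul, ih, h]

lemma gcdFix {M : Type*} [Monoid M] (p : ℕ) :
    ∀ l, ∀ m, ∀ z : M, z ^ p ^ l = z → z ^ p ^ m = z → z ^ p ^ Nat.gcd l m = z := by
  intro l
  induction l using Nat.strong_induction_on with
  | _ l ih =>
    intro m z hl hm
    rcases Nat.eq_zero_or_pos l with h0 | hpos
    · subst h0; simpa using hm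
    · rw [Nat.gcd_rec l m]
      refine ih (m % l) (Nat.mod_lt _ hpos) l z ?_ hl
      have h1 : z ^ p ^ (l * (m / l)) = z := by
        rw [pow_mul]; exact iterFix hl _
      calc z ^ p ^ (m % l) = (z ^ p ^ (l * (m / l))) ^ p ^ (m % l) := by rw [h1]
        _ = z ^ (p ^ (l * (m / l)) * p ^ (m % l)) := by rw [← pow_mul]
        _ = z ^ p ^ (l * (m / l) + m % l) := by rw [pow_add]
        _ = z := by rw [Nat.div_add_mod]; exact hm

section Tr
variable {F : Type} [Field F]

lemma trShift (p m : ℕ) (hcard : ∀ y : F, y ^ p ^ m = y) (y : F) :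
    ∑ i ∈ range m, (y ^ p) ^ p ^ i = ∑ i ∈ range m, y ^ p ^ i := by
  have h : ∀ i, (y ^ p) ^ p ^ i = y ^ p ^ (i + 1) := by
    intro i
    rw [← pow_mul, pow_succ, mul_comm]
  calc ∑ i ∈ range m, (y ^ p) ^ p ^ i = ∑ i ∈ range m, y ^ p ^ (i + 1) := by
        exact Finset.sum_congr rfl fun i _ => h i
    _ = (∑ i ∈ range (m + 1), y ^ p ^ i) - y ^ p ^ 0 := by
        rw [Finset.sum_range_succ']; ring
    _ = (∑ i ∈ range m, y ^ p ^ i) + y ^ p ^ m - y ^ p ^ 0 := by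
        rw [Finset.sum_range_succ]
    _ = ∑ i ∈ range m, y ^ p ^ i := by rw [hcard y, pow_zero, pow_one]; ring

lemma trFrobPow (p m : ℕ) (hcard : ∀ y : F, y ^ p ^ m = y) (r : ℕ) (y : F) :
    ∑ i ∈ range m, (y ^ p ^ r) ^ p ^ i = ∑ i ∈ range m, y ^ p ^ i := by
  induction r with
  | zero => simp
  | succ r ih =>
    have : y ^ p ^ (r + 1) = (y ^ p ^ r) ^ p := by rw [← pow_mul, pow_succ]
    rw [this, trShift p m hcard, ih]

lemma trNondeg [Fintype F] (p m : ℕ) (hp : 1 < p) (hm : 0 < m)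
    (hF : Fintype.card F = p ^ m) (c : F)
    (h : ∀ x : F, ∑ i ∈ range m, (c * x) ^ p ^ i = 0) : c = 0 := by
  classical
  set P : F[X] := ∑ i ∈ range m, C (c ^ p ^ i) * X ^ p ^ i with hP
  have heval : ∀ x : F, P.eval x = 0 := by
    intro x
    rw [hP]
    simp only [eval_finset_sum, eval_mul, eval_C, eval_pow, eval_X]
    rw [← h x]
    exact Finset.sum_congr rfl fun i _ => by rw [mul_pow]
  have hdeg : P.natDegree < Fintype.card F := by
    rw [hF]
    refine lt_of_le_of_lt (Polynomial.natDegree_sum_le_of_forall_le _ _ (n := p ^ (m-1)) ?_)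
      (Nat.pow_lt_pow_right hp (by omega))
    · intro i hi
      have h1 : (C (c ^ p ^ i) * X ^ p ^ i).natDegree ≤ p ^ i :=
        le_trans (natDegree_C_mul_le _ _) (by simp)
      exact le_trans h1 (Nat.pow_le_pow_right (le_of_lt hp) (by simp at hi; omega))
  have hP0 : P = 0 :=
    Polynomial.eq_zero_of_natDegree_lt_card_of_eval_eq_zero P Function.injective_id
      heval (by simpa using hdeg)
  have hc : P.coeff 1 = c := by
    rw [hP]
    rw [Polynomial.finset_sum_coeff]
    rw [Finset.sum_eq_single 0]
    · simp
    · intro i hi hne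
      rw [coeff_C_mul, coeff_X_pow, if_neg, mul_zero]
      intro hcon
      have : p ^ i ≥ p ^ 1 := Nat.pow_le_pow_right (le_of_lt hp) (Nat.one_le_iff_ne_zero.2 hne)
      have hp1 : p ^ 1 = p := pow_one p
      omega
    · intro hcon
      exact absurd (Finset.mem_range.2 hm) hcon
  rw [hP0] at hc
  simpa using hc.symm

end Tr

section NT

lemma geomFormula (q k : ℕ) (hq : 0 < q) :
    (q - 1) * (∑ i ∈ range k, q ^ i) = q ^ k - 1 := by
  have h1 : 1 ≤ q ^ k := Nat.one_le_pow _ _ hq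
  have hcast : ((q : ℤ) - 1) * (∑ i ∈ range k, (q : ℤ) ^ i) = (q : ℤ) ^ k - 1 := by
    rw [mul_comm]; exact geom_sum_mul _ k
  have hq1 : 1 ≤ q := hq
  have : (((q - 1) * (∑ i ∈ range k, q ^ i) : ℕ) : ℤ) = ((q ^ k - 1 : ℕ) : ℤ) := by
    push_cast [Nat.cast_sub hq1, Nat.cast_sub h1]
    exact hcast
  exact Nat.cast_injective this

lemma oddSum (q k : ℕ) (hq : Odd q) (hk : Odd k) : Odd (∑ i ∈ range k, q ^ i) := by
  have hcast : ((∑ i ∈ range k, q ^ i : ℕ) : ZMod 2) = 1 := by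
    push_cast
    have hq1 : (q : ZMod 2) = 1 := by
      have := Nat.odd_iff.mp hq
      rw [← ZMod.natCast_mod q 2, this, Nat.cast_one]
    rw [Finset.sum_congr rfl fun i _ => by rw [hq1, one_pow]]
    simp
    rw [← ZMod.natCast_mod k 2, Nat.odd_iff.mp hk, Nat.cast_one]
  rw [Nat.odd_iff]
  rcases Nat.mod_two_eq_zero_or_one (∑ i ∈ range k, q ^ i) with h | h
  · exfalso
    rw [← ZMod.natCast_mod _ 2, h, Nat.cast_zero] at hcast
    exact absurd hcast (by decide)
  · exact h

lemma dvdPowSubOneGcd (p g a b : ℕ) (hp : 0 < p) (hg : 0 < g)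
    (h1 : g ∣ p ^ a - 1) (h2 : g ∣ p ^ b - 1) : g ∣ p ^ Nat.gcd a b - 1 := by
  haveI : NeZero g := ⟨Nat.pos_iff_ne_zero.mp hg⟩
  have key : ∀ s : ℕ, g ∣ p ^ s - 1 ↔ ((p : ZMod g)) ^ s = 1 := by
    intro s
    have hps : 1 ≤ p ^ s := Nat.one_le_pow _ _ hp
    rw [← Nat.modEq_iff_dvd' hps]
    constructor
    · intro h
      have := (ZMod.natCast_eq_natCast_iff _ _ _).mpr h.symm
      push_cast at this
      exact this
    · intro h
      have : ((p ^ s : ℕ) : ZMod g) = ((1 : ℕ) : ZMod g) := by push_cast; exact h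
      exact ((ZMod.natCast_eq_natCast_iff _ _ _).mp this).symm
  have ha := orderOf_dvd_of_pow_eq_one ((key a).mp h1)
  have hb := orderOf_dvd_of_pow_eq_one ((key b).mp h2)
  exact (key _).mpr (orderOf_dvd_iff_pow_eq_one.mp (Nat.dvd_gcd ha hb))

lemma gcdTwoL (l m n k : ℕ) (hl : 0 < l) (hm : 0 < m)
    (hn : n = Nat.gcd l m) (hk : k = m / n) (hkodd : Odd k) :
    Nat.gcd (2 * l) m = n := by
  have hnpos : 0 < n := hn ▸ Nat.gcd_pos_of_pos_left m hl
  have hnm : n ∣ m := hn ▸ Nat.gcd_dvd_right l m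
  have hmk : m = n * k := by rw [hk, Nat.mul_div_cancel' hnm]
  have h1 : n ∣ Nat.gcd (2 * l) m :=
    Nat.dvd_gcd (Dvd.dvd.mul_left (hn ▸ Nat.gcd_dvd_left l m) 2) hnm
  have h2 : Nat.gcd (2 * l) m ∣ 2 * n := by
    have := Nat.gcd_dvd_gcd_mul_right_right (2 * l) m 2
    have heq : Nat.gcd (2 * l) (m * 2) = 2 * n := by
      rw [mul_comm m 2, Nat.gcd_mul_left, ← hn]
    exact heq ▸ this
  obtain ⟨e, he⟩ := h1
  have hgm : n * e ∣ m := he ▸ Nat.gcd_dvd_right (2 * l) m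
  have he2 : e ∣ 2 := by
    rw [he, mul_comm 2 n] at h2
    exact (Nat.mul_dvd_mul_iff_left hnpos).mp h2
  rcases (Nat.dvd_prime Nat.prime_two).mp he2 with rfl | rfl
  · rw [he, mul_one]
  · exfalso
    rw [hmk] at hgm
    have h2k : 2 ∣ k := (Nat.mul_dvd_mul_iff_left hnpos).mp hgm
    rw [Nat.odd_iff] at hkodd
    omega

end NT

lemma gcdMain (p m l n k : ℕ) (hp : p.Prime) (hpodd : Odd p) (hm : 0 < m) (hl : 0 < l)
    (hn : n = Nat.gcd l m) (hk : k = m / n) (hkodd : Odd k) :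
    Nat.gcd (1 + p ^ l) (p ^ m - 1) = 2 := by
  have hp1 : 1 < p := hp.one_lt
  have hple : 1 ≤ p ^ l := Nat.one_le_pow _ _ hp.pos
  have hpm : 1 < p ^ m := Nat.one_lt_pow (by omega) hp1
  set g := Nat.gcd (1 + p ^ l) (p ^ m - 1) with hg
  have hol : Odd (p ^ l) := hpodd.pow
  have hom : Odd (p ^ m) := hpodd.pow
  rw [Nat.odd_iff] at hol hom
  have h2g : 2 ∣ g := Nat.dvd_gcd (by omega) (by omega)
  have hgpos : 0 < g := Nat.gcd_pos_of_pos_right _ (by omega)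
  have hfac : (1 + p ^ l) ∣ p ^ (2 * l) - 1 := by
    refine ⟨p ^ l - 1, ?_⟩
    have h21 : 1 ≤ p ^ (2 * l) := Nat.one_le_pow _ _ hp.pos
    have : ((p ^ (2 * l) - 1 : ℕ) : ℤ) = (((1 + p ^ l) * (p ^ l - 1) : ℕ) : ℤ) := by
      push_cast [Nat.cast_sub h21, Nat.cast_sub hple]
      rw [two_mul, pow_add]
      ring
    exact Nat.cast_injective this
  have hdvd2l : g ∣ p ^ (2 * l) - 1 := (Nat.gcd_dvd_left _ _).trans hfac
  have hdvdm : g ∣ p ^ m - 1 := Nat.gcd_dvd_right _ _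
  have hgn := dvdPowSubOneGcd p g (2 * l) m hp.pos hgpos hdvd2l hdvdm
  rw [gcdTwoL l m n k hl hm hn hk hkodd] at hgn
  have hnl : n ∣ l := hn ▸ Nat.gcd_dvd_left l m
  obtain ⟨t, ht⟩ := hnl
  have h3 : (p ^ n - 1 : ℕ) ∣ p ^ l - 1 := by
    have := Nat.sub_dvd_pow_sub_pow (p ^ n) 1 t
    simpa [← pow_mul, ← ht] using this
  have hgl : g ∣ p ^ l - 1 := hgn.trans h3
  have hgl1 : g ∣ 1 + p ^ l := Nat.gcd_dvd_left _ _
  have hg2 : g ∣ 2 := by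
    have hd := Nat.dvd_sub hgl1 hgl
    have heq : (1 + p ^ l) - (p ^ l - 1) = 2 := by omega
    rwa [heq] at hd
  exact Nat.dvd_antisymm hg2 h2g

section Grp
variable {F : Type} [Field F] [Fintype F]

lemma powCardSubOne (z : F) (hz : z ≠ 0) (q : ℕ) (hq : 1 ≤ q) (h : z ^ q = z) :
    z ^ (q - 1) = 1 := by
  have : z ^ (q - 1) * z = 1 * z := by
    rw [one_mul, ← pow_succ]
    rw [Nat.sub_add_cancel hq]
    exact h
  exact mul_right_cancel₀ hz this

lemma powImage (d : ℕ) (hgcd : Nat.gcd d (Fintype.card F - 1) = 2) (b : F) (hb : b ≠ 0) :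
    ∃ a : F, a ≠ 0 ∧ a ^ d = b ^ 2 := by
  classical
  set N := Fintype.card F - 1 with hN
  set β : Fˣ := Units.mk0 b hb with hβ
  have hβN : β ^ (N : ℤ) = 1 := by
    rw [zpow_natCast, hN, ← Fintype.card_units (α := F)]
    exact pow_card_eq_one
  have hbez : (d : ℤ) * Nat.gcdA d N + (N : ℤ) * Nat.gcdB d N = 2 := by
    have h := Nat.gcd_eq_gcd_ab d N
    rw [hgcd] at h
    exact_mod_cast h.symm
  set A := Nat.gcdA d N with hA
  refine ⟨((β ^ A : Fˣ) : F), Units.ne_zero _, ?_⟩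
  have key : (β ^ A) ^ (d : ℤ) = β ^ (2 : ℤ) := by
    rw [← zpow_mul]
    have hAd : A * (d : ℤ) = 2 - (N : ℤ) * Nat.gcdB d N := by linarith [hbez]
    rw [hAd, zpow_sub, zpow_mul, hβN, one_zpow]
    simp
  have key2 : ((β ^ A : Fˣ) : F) ^ d = ((β ^ (2:ℤ) : Fˣ) : F) := by
    rw [← Units.val_pow_eq_pow_val, ← zpow_natCast (β ^ A) d, key]
  rw [key2]
  show ((β ^ (2:ℤ) : Fˣ) : F) = b ^ 2
  rw [zpow_two]
  simp [hβ]
  rw [sq]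

lemma sqrtDescent (q T : ℕ) (hq : Odd q) (hq2 : 2 ≤ q)
    (hT : (q - 1) * T = Fintype.card F - 1) (hTodd : Odd T)
    (z c : F) (hz : z ≠ 0) (hzq : z ^ q = z) (hc : z = c ^ 2) :
    ∃ u : F, u ≠ 0 ∧ u ^ q = u ∧ z = u ^ 2 := by
  classical
  set N := Fintype.card F - 1 with hN
  have hc0 : c ≠ 0 := by rintro rfl; simp at hc; exact hz hc
  set ζ : Fˣ := Units.mk0 z hz with hζ
  set γ : Fˣ := Units.mk0 c hc0 with hγ
  have hγζ : γ ^ 2 = ζ := by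
    ext; simp [hγ, hζ, hc.symm]
  have hq3 : 3 ≤ q := by rw [Nat.odd_iff] at hq; omega
  set s := (q - 1) / 2 with hs
  have hs2 : q - 1 = 2 * s := by rw [Nat.odd_iff] at hq; omega
  have hspos : 0 < s := by omega
  have hγN : γ ^ N = 1 := by
    rw [hN, ← Fintype.card_units (α := F)]; exact pow_card_eq_one
  have hζsT : ζ ^ (s * T) = 1 := by
    rw [← hγζ, ← pow_mul]
    have : 2 * (s * T) = N := by rw [← hT, hs2]; ring
    rw [this, hγN]
  have hζq1 : ζ ^ (q - 1) = 1 := by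
    ext
    push_cast
    exact powCardSubOne z hz q (by omega) hzq
  have hord : orderOf ζ ∣ s := by
    have h1 := orderOf_dvd_of_pow_eq_one hζsT
    have h2 := orderOf_dvd_of_pow_eq_one hζq1
    rw [hs2] at h2
    have h3 : orderOf ζ ∣ Nat.gcd (s * T) (s * 2) := Nat.dvd_gcd h1 (by rwa [mul_comm s 2])
    rwa [Nat.gcd_mul_left, Nat.Coprime.gcd_eq_one, mul_one] at h3
    exact hTodd.coprime_two_right
  have hζs : ζ ^ s = 1 := orderOf_dvd_iff_pow_eq_one.mp hord
  obtain ⟨g, hg⟩ := IsCyclic.exists_generator (α := Fˣ)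
  have hordg : orderOf g = N := by
    rw [hN, ← Fintype.card_units (α := F)]
    rw [← Nat.card_eq_fintype_card]
    exact orderOf_eq_card_of_forall_mem_zpowers hg
  obtain ⟨j, hj'⟩ := (mem_powers_iff_mem_zpowers).mpr (hg ζ)
  have hj : g ^ j = ζ := hj'
  have hNjs : N ∣ j * s := by
    rw [← hordg]
    apply orderOf_dvd_of_pow_eq_one
    rw [pow_mul, hj, hζs]
  have hN2Ts : N = (2 * T) * s := by rw [← hT, hs2]; ring
  have h2Tj : 2 * T ∣ j := by
    apply Nat.dvd_of_mul_dvd_mul_right hspos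
    rw [← hN2Ts]
    exact hNjs
  obtain ⟨i, hi⟩ := h2Tj
  set u : Fˣ := g ^ (T * i) with hu
  have hu2 : u ^ 2 = ζ := by
    rw [hu, ← pow_mul, ← hj, hi]
    congr 1
    ring
  have huq : u ^ (q - 1) = 1 := by
    rw [hu, ← pow_mul, hs2]
    have : T * i * (2 * s) = N * i := by rw [hN2Ts]; ring
    rw [this, pow_mul, ← hordg, pow_orderOf_eq_one, one_pow]
  refine ⟨(u : F), Units.ne_zero _, ?_, ?_⟩
  · have : (u : F) ^ (q - 1) = 1 := by
      rw [← Units.val_pow_eq_pow_val, huq, Units.val_one]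
    calc (u : F) ^ q = (u : F) ^ (q - 1) * (u : F) := by
          rw [← pow_succ, Nat.sub_add_cancel (by omega)]
      _ = (u : F) := by rw [this, one_mul]
  · have := congrArg Units.val hu2
    rw [Units.val_pow_eq_pow_val] at this
    simp [hζ] at this
    rw [← this]
end Grp

lemma rangeCond (p m l : ℕ) (hm : 0 < m) {F : Type} [Field F] [Fintype F]
    [Fact p.Prime] [CharP F p] (hF : Fintype.card F = p ^ m) (v a : F)
    (hv : v ≠ 0) (ha : a ≠ 0) :
    (∀ x : F, ∑ i ∈ Finset.range m, (v * (a * x ^ p ^ l - x * a ^ p ^ l)) ^ p ^ i = 0) ↔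
      (v * a ^ (1 + p ^ l)) ^ p ^ l = v * a ^ (1 + p ^ l) := by
  have hp1 : 1 < p := (Fact.out : p.Prime).one_lt
  have hcard : ∀ y : F, y ^ p ^ m = y := fun y => by rw [← hF]; exact FiniteField.pow_card y
  have hsplit : ∀ x : F,
      ∑ i ∈ Finset.range m, (v * (a * x ^ p ^ l - x * a ^ p ^ l)) ^ p ^ i
        = ∑ i ∈ Finset.range m, (v * a * x ^ p ^ l) ^ p ^ i
          - ∑ i ∈ Finset.range m, (v * a ^ p ^ l * x) ^ p ^ i := by
    intro x
    rw [← Finset.sum_sub_distrib]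
    refine Finset.sum_congr rfl fun i _ => ?_
    rw [← sub_pow_char_pow]
    congr 1
    ring
  set w := v * a ^ p ^ l with hw
  have hiter : ∀ (y : F) (t : ℕ), y ^ p ^ (m * t) = y := by
    intro y t
    rw [pow_mul]
    exact iterFix (hcard y) t
  have hzeq : v * a ^ (1 + p ^ l) = w * a := by rw [hw, pow_add, pow_one]; ring
  constructor
  · intro h
    have hr : l * (m - 1) + l = m * l := by
      cases m with
      | zero => omega
      | succ m' => simp only [Nat.succ_sub_one]; ring
    set r := l * (m - 1) with hrdef
    have hr2 : l + r = m * l := by omega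
    have hmain : ∀ t : F, ∑ i ∈ Finset.range m, ((v * a - w ^ p ^ l) * t) ^ p ^ i = 0 := by
      intro t
      have h1 := h (t ^ p ^ r)
      rw [hsplit] at h1
      have h2 : (t ^ p ^ r) ^ p ^ l = t := by
        rw [← pow_mul, ← pow_add, hr]
        exact hiter t l
      rw [h2] at h1
      have h3 : w * (t ^ p ^ r) = (w ^ p ^ l * t) ^ p ^ r := by
        rw [mul_pow, ← pow_mul, ← pow_add, hr2, hiter w l]
      rw [h3, trFrobPow p m hcard r (w ^ p ^ l * t)] at h1
      rw [← h1, ← Finset.sum_sub_distrib]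
      refine Finset.sum_congr rfl fun i _ => ?_
      rw [← sub_pow_char_pow]
      congr 1
      ring
    have hc := trNondeg p m hp1 hm hF (v * a - w ^ p ^ l) hmain
    have hE : v * a = w ^ p ^ l := by
      have := sub_eq_zero.mp hc
      exact this
    rw [hzeq, mul_pow, ← hE, hw]
    ring
  · intro hfix x
    have hE : w ^ p ^ l = v * a := by
      rw [hzeq, mul_pow] at hfix
      have hne : a ^ p ^ l ≠ 0 := pow_ne_zero _ ha
      apply mul_right_cancel₀ hne
      rw [hfix, hw]
      ring
    rw [hsplit]
    have h4 : v * a * x ^ p ^ l = (w * x) ^ p ^ l := by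
      rw [mul_pow, hE]
    rw [h4, trFrobPow p m hcard l (w * x)]
    exact sub_self _

lemma charEq (p m : ℕ) (hp : p.Prime) (hm : 0 < m) (F : Type) [Field F] [Fintype F]
    (hF : Fintype.card F = p ^ m) : CharP F p := by
  haveI h := ringChar.charP F
  obtain ⟨s, hq, hcard⟩ := FiniteField.card F (ringChar F)
  have hdvd : p ∣ ringChar F ^ (s : ℕ) := by
    rw [← hcard, hF]
    exact dvd_pow_self p (by omega)
  have hpq : p = ringChar F :=
    (Nat.prime_dvd_prime_iff_eq hp hq).mp (hp.dvd_of_dvd_pow hdvd)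
  rw [hpq]
  exact h

lemma nonsqFactor {F : Type} [Field F] [Fintype F] (hchar : ringChar F ≠ 2)
    (hodd : Odd (Fintype.card F)) (z v : F) (hz : z ≠ 0) (hv : v ≠ 0)
    (h1 : ¬ ∃ c : F, z = c ^ 2) (h2 : ¬ ∃ y : F, y ≠ 0 ∧ y ^ 2 = v) :
    ∃ b : F, b ≠ 0 ∧ z = v * b ^ 2 := by
  have h1' : ¬ IsSquare z := by
    rintro ⟨r, hr⟩
    exact h1 ⟨r, by rw [hr, sq]⟩
  have h2' : ¬ IsSquare v := by
    rintro ⟨r, hr⟩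
    have hr0 : r ≠ 0 := by rintro rfl; rw [mul_zero] at hr; exact hv hr
    exact h2 ⟨r, hr0, by rw [hr, sq]⟩
  set e := Fintype.card F / 2 with he
  have hpow : ∀ x : F, x ≠ 0 → x ^ e = 1 ∨ x ^ e = -1 := by
    intro x hx
    have hx1 : x ^ (Fintype.card F - 1) = 1 := FiniteField.pow_card_sub_one_eq_one x hx
    have h2e : e + e = Fintype.card F - 1 := by rw [Nat.odd_iff] at hodd; omega
    have hsq : x ^ e * x ^ e = 1 := by rw [← pow_add, h2e]; exact hx1
    exact mul_self_eq_one_iff.mp hsq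
  have hze : z ^ e = -1 := by
    rcases hpow z hz with h | h
    · exact absurd ((FiniteField.isSquare_iff hchar hz).mpr h) h1'
    · exact h
  have hve : v ^ e = -1 := by
    rcases hpow v hv with h | h
    · exact absurd ((FiniteField.isSquare_iff hchar hv).mpr h) h2'
    · exact h
  have hzv0 : z * v⁻¹ ≠ 0 := mul_ne_zero hz (inv_ne_zero hv)
  have hsq : IsSquare (z * v⁻¹) := by
    apply (FiniteField.isSquare_iff hchar hzv0).mpr
    rw [mul_pow, hze, inv_pow, hve]
    norm_num
  obtain ⟨r, hr⟩ := hsq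
  have hr0 : r ≠ 0 := by rintro rfl; rw [mul_zero] at hr; exact hzv0 hr
  refine ⟨r, hr0, ?_⟩
  have : z = (r * r) * v := by
    rw [← hr]
    field_simp
  rw [this, sq]
  ring

/-- For `p` odd and `k` odd: the set `{v·a^{1+p^l} : a ≠ 0, Im(f_{a,θ}) ⊆ Ker(ψ_v)}`
is the set of nonzero squares of `F_{p^n}` if `v` is a square in `F*`, and the set
of non-squares of `F_{p^n}*` otherwise. -/
theorem stmt_19 (p m l n k : ℕ) (hp : p.Prime) (hpodd : Odd p) (hm : 0 < m) (hl : 0 < l)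
    (hn : n = Nat.gcd l m) (hk : k = m / n) (hkodd : Odd k)
    (F : Type) [Field F] [Fintype F] (hF : Fintype.card F = p ^ m)
    (v : F) (hv : v ≠ 0) :
    ((∃ y : F, y ≠ 0 ∧ y ^ 2 = v) →
      {z : F | ∃ a : F, a ≠ 0 ∧
          Set.range (fun x : F => a * x ^ p ^ l - x * a ^ p ^ l) ⊆
            {x : F | ∑ i ∈ Finset.range m, (v * x) ^ p ^ i = 0} ∧
          z = v * a ^ (1 + p ^ l)}
        = {z : F | ∃ u : F, u ≠ 0 ∧ u ^ p ^ n = u ∧ z = u ^ 2}) ∧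
    (¬ (∃ y : F, y ≠ 0 ∧ y ^ 2 = v) →
      {z : F | ∃ a : F, a ≠ 0 ∧
          Set.range (fun x : F => a * x ^ p ^ l - x * a ^ p ^ l) ⊆
            {x : F | ∑ i ∈ Finset.range m, (v * x) ^ p ^ i = 0} ∧
          z = v * a ^ (1 + p ^ l)}
        = {z : F | z ≠ 0 ∧ z ^ p ^ n = z ∧
            ¬ ∃ u : F, u ≠ 0 ∧ u ^ p ^ n = u ∧ u ^ 2 = z}) := by
  haveI : Fact p.Prime := ⟨hp⟩
  haveI hcharP : CharP F p := charEq p m hp hm F hF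
  have hp1 : 1 < p := hp.one_lt
  have hnpos : 0 < n := hn ▸ Nat.gcd_pos_of_pos_left m hl
  have hnm : n ∣ m := hn ▸ Nat.gcd_dvd_right l m
  have hnl : n ∣ l := hn ▸ Nat.gcd_dvd_left l m
  have hmk : m = n * k := by rw [hk, Nat.mul_div_cancel' hnm]
  have hqodd : Odd (p ^ n) := hpodd.pow
  have hq2 : 2 ≤ p ^ n := Nat.one_lt_pow (by omega) hp1
  have hTodd : Odd (∑ i ∈ Finset.range k, (p ^ n) ^ i) := oddSum _ k hqodd hkodd
  have hqk : (p ^ n) ^ k = p ^ m := by rw [← pow_mul, ← hmk]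
  have hgeom : (p ^ n - 1) * (∑ i ∈ Finset.range k, (p ^ n) ^ i) = Fintype.card F - 1 := by
    rw [hF, ← hqk]
    exact geomFormula _ k (by omega)
  have hgcd2 : Nat.gcd (1 + p ^ l) (Fintype.card F - 1) = 2 := by
    rw [hF]
    exact gcdMain p m l n k hp hpodd hm hl hn hk hkodd
  have hpm : ∀ y : F, y ^ p ^ m = y := fun y => by rw [← hF]; exact FiniteField.pow_card y
  have hchar2 : ringChar F ≠ 2 := by
    have hring : ringChar F = p := ringChar.eq F p
    rw [hring, Nat.odd_iff] at *
    omega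
  have hcardodd : Odd (Fintype.card F) := by rw [hF]; exact hpodd.pow
  have hset : ∀ z : F,
      (∃ a : F, a ≠ 0 ∧
          Set.range (fun x : F => a * x ^ p ^ l - x * a ^ p ^ l) ⊆
            {x : F | ∑ i ∈ Finset.range m, (v * x) ^ p ^ i = 0} ∧
          z = v * a ^ (1 + p ^ l)) ↔
      (z ≠ 0 ∧ z ^ p ^ n = z ∧ ∃ b : F, b ≠ 0 ∧ z = v * b ^ 2) := by
    intro z
    constructor
    · rintro ⟨a, ha, hrange, rfl⟩
      have hcond : (v * a ^ (1 + p ^ l)) ^ p ^ l = v * a ^ (1 + p ^ l) := by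
        apply (rangeCond p m l hm hF v a hv ha).mp
        intro x
        exact hrange (Set.mem_range_self x)
      refine ⟨mul_ne_zero hv (pow_ne_zero _ ha), ?_, ?_⟩
      · have h1 := gcdFix p l m _ hcond (hpm _)
        rwa [← hn] at h1
      · have h2 : 2 ∣ 1 + p ^ l := by
          have : Odd (p ^ l) := hpodd.pow
          rw [Nat.odd_iff] at this
          omega
        obtain ⟨t, ht⟩ := h2
        exact ⟨a ^ t, pow_ne_zero _ ha, by rw [← pow_mul, mul_comm t 2, ← ht]⟩
    · rintro ⟨hz0, hzq, b, hb, hzeq⟩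
      obtain ⟨a, ha0, had⟩ := powImage (1 + p ^ l) hgcd2 b hb
      have hza : z = v * a ^ (1 + p ^ l) := by rw [had, hzeq]
      have hfix : (v * a ^ (1 + p ^ l)) ^ p ^ l = v * a ^ (1 + p ^ l) := by
        rw [← hza]
        obtain ⟨t, ht⟩ := hnl
        rw [ht, pow_mul]
        exact iterFix hzq t
      refine ⟨a, ha0, ?_, hza⟩
      rintro y ⟨x, rfl⟩
      exact (rangeCond p m l hm hF v a hv ha0).mpr hfix x
  constructor
  · rintro ⟨y, hy0, hy2⟩
    ext z
    simp only [Set.mem_setOf_eq]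
    rw [hset z]
    constructor
    · rintro ⟨hz0, hzq, b, hb, hzeq⟩
      have hc : z = (y * b) ^ 2 := by rw [hzeq, ← hy2]; ring
      exact sqrtDescent (p ^ n) _ hqodd hq2 hgeom hTodd z (y * b) hz0 hzq hc
    · rintro ⟨u, hu0, huq, rfl⟩
      refine ⟨pow_ne_zero _ hu0, ?_, ?_⟩
      · rw [← pow_mul, mul_comm 2 (p ^ n), pow_mul, huq]
      · refine ⟨y⁻¹ * u, mul_ne_zero (inv_ne_zero hy0) hu0, ?_⟩
        rw [← hy2]
        field_simp
  · intro hns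
    ext z
    simp only [Set.mem_setOf_eq]
    rw [hset z]
    constructor
    · rintro ⟨hz0, hzq, b, hb, hzeq⟩
      refine ⟨hz0, hzq, ?_⟩
      rintro ⟨u, hu0, huq, huz⟩
      apply hns
      refine ⟨u * b⁻¹, mul_ne_zero hu0 (inv_ne_zero hb), ?_⟩
      field_simp
      linear_combination huz + hzeq
    · rintro ⟨hz0, hzq, hnot⟩
      refine ⟨hz0, hzq, ?_⟩
      apply nonsqFactor hchar2 hcardodd z v hz0 hv _ hns
      rintro ⟨c, hc⟩
      obtain ⟨u, hu0, huq, hzu⟩ :=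
        sqrtDescent (p ^ n) _ hqodd hq2 hgeom hTodd z c hz0 hzq hc
      exact hnot ⟨u, hu0, huq, hzu.symm⟩
end
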